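/- arXiv:2112.03366 — 4 statements merged into one kernel-verified Lean document; each statement's English description precedes it below -/
import Mathlib

section
/- Let G and H be simple graphs on n vertices that share n−1 cards, and let r ≥ 1 be an integer. If κ_r(G) = κ_r(H), then the multiset of K_r-degrees {deg_r(v,G) : v ∈ V(G)} equals the multiset {deg_r(v,H) : v ∈ V(H)}. -/
open SimpleGraph

/-- `kappa G r` is the number of `r`-cliques of the graph `G`. -/
noncomputable def kappa {V : Type*} (G : SimpleGraph V) (r : ℕ) : ℕ :=
  (G.cliqueSet r).ncard

/-- `degR G r v` is the number of `r`-cliques of `G` that contain the vertex `v`. -/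
noncomputable def degR {V : Type*} (G : SimpleGraph V) (r : ℕ) (v : V) : ℕ :=
  {s | s ∈ G.cliqueSet r ∧ v ∈ s}.ncard

/-- `deg G v` is the degree of the vertex `v` in `G`. -/
noncomputable def deg {V : Type*} (G : SimpleGraph V) (v : V) : ℕ :=
  (G.neighborSet v).ncard

/-- `gcard G v` is the card `G - v`: the induced subgraph of `G` on `V(G) \ {v}`. -/
def gcard {V : Type*} (G : SimpleGraph V) (v : V) : SimpleGraph {x : V // x ≠ v} :=
  G.induce {x : V | x ≠ v}

/-- The maximum degree `Δ(G)`. -/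
noncomputable def maxDeg {n : ℕ} (G : SimpleGraph (Fin n)) : ℕ :=
  Finset.univ.sup (fun v => deg G v)

/-- The minimum degree `δ(G)`. -/
noncomputable def minDeg {n : ℕ} (G : SimpleGraph (Fin n)) : ℕ :=
  sInf (Set.range (fun v => deg G v))

/-- `ℓ(G)`: the number of vertices of maximum degree. -/
noncomputable def numMaxDeg {n : ℕ} (G : SimpleGraph (Fin n)) : ℕ :=
  (Finset.univ.filter (fun v => deg G v = maxDeg G)).card

/-- `G` and `H` share `n-1` cards via the vertices `u`, `w` and the bijection `π`:
for every `v ≠ u`, the card `G - v` is isomorphic to the card `H - π(v)`. -/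
def ShareCardsVia {n : ℕ} (G H : SimpleGraph (Fin n)) (u w : Fin n)
    (π : {x : Fin n // x ≠ u} ≃ {y : Fin n // y ≠ w}) : Prop :=
  ∀ v : {x : Fin n // x ≠ u}, Nonempty (gcard G v.1 ≃g gcard H (π v).1)

/-- `G` and `H` share `n-1` cards. -/
def ShareCards {n : ℕ} (G H : SimpleGraph (Fin n)) : Prop :=
  ∃ (u w : Fin n) (π : {x : Fin n // x ≠ u} ≃ {y : Fin n // y ≠ w}),
    ShareCardsVia G H u w π

/-!
Deleting a vertex `v` destroys exactly the `r`-cliques through `v`, so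
`κ_r(G) = κ_r(G - v) + deg_r(v, G)`. Hence, when `κ_r(G) = κ_r(H)`, matching cards `G - v ≅ H - π v`
give `deg_r(v, G) = deg_r(π v, H)` for every vertex but the unmatched one `u`. Its `K_r`-degree is
then forced by the double-counting identity `∑ᵥ deg_r(v, G) = r κ_r(G)`.
-/

open Finset

namespace SimpleGraph

variable {V W : Type*} {G : SimpleGraph V} {r : ℕ}

theorem kappa_congr {H : SimpleGraph W} (e : G ≃g H) : kappa G r = kappa H r := by
  have hH : G.map e.toEquiv = H := by
    ext x y
    obtain ⟨a, rfl⟩ := e.surjective x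
    obtain ⟨b, rfl⟩ := e.surjective y
    exact (map_adj_apply (f := e.toEquiv.toEmbedding)).trans e.map_adj_iff.symm
  rw [kappa, kappa, ← hH, cliqueSet_map_of_equiv,
    Set.ncard_image_of_injective _ (Finset.map_injective _)]

theorem ncard_cliqueSet_induce (s : Set V) :
    ((G.induce s).cliqueSet r).ncard = {c ∈ G.cliqueSet r | (c : Set V) ⊆ s}.ncard := by
  classical
  have himage : Finset.map (Function.Embedding.subtype _) '' (G.induce s).cliqueSet r =
      {c ∈ G.cliqueSet r | (c : Set V) ⊆ s} := by
    ext c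
    constructor
    · rintro ⟨t, ht, rfl⟩
      refine ⟨(isNClique_induce_iff s t r).1 ht, ?_⟩
      simp
    · rintro ⟨hc, hcs⟩
      refine ⟨c.subtype (· ∈ s), ?_, subtype_map_of_mem hcs⟩
      rw [mem_cliqueSet_iff, isNClique_induce_iff, subtype_map_of_mem hcs]
      exact hc
  rw [← himage, Set.ncard_image_of_injective _ (Finset.map_injective _)]

theorem kappa_eq_kappa_gcard_add_degR [Finite V] (v : V) :
    kappa G r = kappa (gcard G v) r + degR G r v := by
  have hgcard : kappa (gcard G v) r = (G.cliqueSet r \ {c | v ∈ c}).ncard := by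
    rw [kappa, gcard, ncard_cliqueSet_induce]
    congr 1
    ext c
    simp [Set.subset_def]
  rw [hgcard, add_comm, kappa, degR, ← Set.ncard_inter_add_ncard_sdiff_eq_ncard _ {c | v ∈ c}]
  rfl

theorem sum_degR_eq_mul_kappa [Fintype V] : ∑ v, degR G r v = r * kappa G r := by
  classical
  have hdeg : ∀ v, degR G r v = #{c ∈ G.cliqueFinset r | v ∈ c} := fun v => by
    rw [degR, ← Set.ncard_coe_finset, coe_filter]
    simp
  have hkappa : kappa G r = #(G.cliqueFinset r) := by
    rw [kappa, ← coe_cliqueFinset, Set.ncard_coe_finset]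
  calc ∑ v, degR G r v = ∑ v, #{c ∈ G.cliqueFinset r | v ∈ c} := sum_congr rfl fun v _ => hdeg v
    _ = ∑ c ∈ G.cliqueFinset r, #{v | v ∈ c} :=
      sum_card_bipartiteAbove_eq_sum_card_bipartiteBelow (· ∈ ·)
    _ = ∑ c ∈ G.cliqueFinset r, r := sum_congr rfl fun c hc => by
      simpa using (mem_cliqueFinset_iff.1 hc).card_eq
    _ = r * kappa G r := by rw [sum_const, smul_eq_mul, hkappa, mul_comm]

theorem degR_eq_of_gcard_iso [Finite V] [Finite W] {H : SimpleGraph W} {v : V} {w : W}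
    (hk : kappa G r = kappa H r) (e : gcard G v ≃g gcard H w) : degR G r v = degR H r w := by
  have hG := kappa_eq_kappa_gcard_add_degR (G := G) (r := r) v
  have hH := kappa_eq_kappa_gcard_add_degR (G := H) (r := r) w
  have hcard := kappa_congr (r := r) e
  omega

end SimpleGraph

namespace Equiv

variable {α β : Type*} [DecidableEq α] [DecidableEq β] {u : α} {w : β}

def extendSubtypeNe (π : {x // x ≠ u} ≃ {y // y ≠ w}) : α ≃ β :=
  (optionSubtypeNe u).symm.trans (π.optionCongr.trans (optionSubtypeNe w))

theorem extendSubtypeNe_of_ne (π : {x // x ≠ u} ≃ {y // y ≠ w}) {v : α} (hv : v ≠ u) :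
    extendSubtypeNe π v = π ⟨v, hv⟩ := by
  simp [extendSubtypeNe, optionSubtypeNe_symm_of_ne hv]

end Equiv

theorem Fintype.apply_eq_of_sum_eq {α M : Type*} [Fintype α] [AddCancelCommMonoid M]
    {f g : α → M} {u : α} (hne : ∀ v ≠ u, f v = g v) (hsum : ∑ v, f v = ∑ v, g v) :
    f u = g u := by
  classical
  have hrest : ∑ v ∈ univ.erase u, f v = ∑ v ∈ univ.erase u, g v :=
    Finset.sum_congr rfl fun v hv => hne v (ne_of_mem_erase hv)
  rw [← add_sum_erase _ f (mem_univ u), ← add_sum_erase _ g (mem_univ u), hrest] at hsum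
  exact add_right_cancel hsum

theorem cliqueDegreeSequence_eq_general {n : ℕ}
    (G H : SimpleGraph (Fin n)) (hshare : ShareCards G H)
    (r : ℕ) (hk : kappa G r = kappa H r) :
    Finset.univ.val.map (fun v => degR G r v) =
      Finset.univ.val.map (fun v => degR H r v) := by
  obtain ⟨u, w, π, hcards⟩ := hshare
  set e := Equiv.extendSubtypeNe π
  have hne : ∀ v ≠ u, degR G r v = degR H r (e v) := fun v hv => by
    rw [Equiv.extendSubtypeNe_of_ne π hv]
    exact degR_eq_of_gcard_iso hk (hcards ⟨v, hv⟩).some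
  have hsum : ∑ v, degR G r v = ∑ v, degR H r (e v) := by
    rw [Equiv.sum_comp e (degR H r), sum_degR_eq_mul_kappa, sum_degR_eq_mul_kappa, hk]
  have hall : ∀ v, degR G r v = degR H r (e v) := fun v => by
    by_cases hv : v = u
    · exact hv ▸ Fintype.apply_eq_of_sum_eq hne hsum
    · exact hne v hv
  calc Finset.univ.val.map (fun v => degR G r v)
      = (Finset.univ.val.map e).map (fun v => degR H r v) := by
        rw [Multiset.map_map]
        exact Multiset.map_congr rfl fun v _ => hall v
    _ = Finset.univ.val.map (fun v => degR H r v) := by rw [Multiset.map_univ_val_equiv]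

theorem cliqueDegreeSequence_eq {n : ℕ}
    (G H : SimpleGraph (Fin n)) (hshare : ShareCards G H)
    (r : ℕ) (hr : 1 ≤ r) (hk : kappa G r = kappa H r) :
    Finset.univ.val.map (fun v => degR G r v) =
      Finset.univ.val.map (fun v => degR H r v) :=
  cliqueDegreeSequence_eq_general G H hshare r hk
end

section
/- Let G and H be simple graphs on n vertices that share n−1 cards via vertices u ∈ V(G), w ∈ V(H) and a bijection π. Suppose Δ(G) = Δ(H) ≤ n−2, the vertices of maximum degree form a clique in G and also in H, deg(u,G) = Δ(G), deg(w,H) = Δ(H), and ℓ(G) = ℓ(H) = ℓ. Then for every integer r ≥ 1 with n − ℓ − r ≠ 0 we have κ_r(G) = κ_r(H). -/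
open SimpleGraph

/-!
Removing a vertex `v` deletes `deg v` edges, so summing over the `n - 1` shared cards gives
`(n - 3) |E(G)| + Δ` for `G` and the same expression for `H`. Hence `G` and `H` have equally many
edges (when `Δ ≤ 1` this is immediate from `2 |E| = Δ ℓ`), and then `π` preserves
degrees.

A vertex `x` of degree `Δ` keeps degree `Δ` in `G - v` exactly when `v` is a non-neighbour of `x`,
and then `x` lies in the same `r`-cliques as in `G`. Since the maximum-degree vertices form a clique
containing `u`, the cards `G - v`, `v ≠ u`, together count each pair `(x, K)` with `deg x = Δ` and
`K` an `r`-clique through `x` exactly `n - 1 - Δ` times; so `G` and `H` have the same number `t` of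
such pairs.

Finally `κ_r(G - v) = κ_r(G) - #{r-cliques through v}`, and summing over the shared cards of the
vertices of degree `≠ Δ` gives `(n - ℓ - r) κ_r(G) + t`, which is also the sum for `H`.
-/

open Finset

namespace SimpleGraph.Iso

variable {V W : Type*} {G : SimpleGraph V} {G' : SimpleGraph W}

theorem map_eq (e : G ≃g G') : G.map e.toEquiv.toEmbedding = G' := by
  ext a b
  obtain ⟨a, rfl⟩ := e.surjective a
  obtain ⟨b, rfl⟩ := e.surjective b
  exact (map_adj_apply (f := e.toEquiv.toEmbedding)).trans e.map_adj_iff.symm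

theorem image_cliqueSet (e : G ≃g G') (r : ℕ) :
    Finset.map e.toEquiv.toEmbedding '' G.cliqueSet r = G'.cliqueSet r := by
  conv_rhs => rw [← e.map_eq]
  exact (cliqueSet_map_of_equiv G e.toEquiv r).symm

theorem kappa_eq (e : G ≃g G') (r : ℕ) : kappa G' r = kappa G r := by
  rw [kappa, kappa, ← e.image_cliqueSet, Set.ncard_image_of_injective _ (Finset.map_injective _)]

theorem degR_eq (e : G ≃g G') (r : ℕ) (v : V) : degR G' r (e v) = degR G r v := by
  have : {s | s ∈ G'.cliqueSet r ∧ e v ∈ s} =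
      Finset.map e.toEquiv.toEmbedding '' (G.cliqueSet r ∩ {s | v ∈ s}) := by
    rw [← e.image_cliqueSet]
    ext s
    constructor
    · rintro ⟨⟨s, hs, rfl⟩, hv⟩
      exact ⟨s, ⟨hs, (mem_map' _).1 hv⟩, rfl⟩
    · rintro ⟨s, ⟨hs, hv⟩, rfl⟩
      exact ⟨⟨s, hs, rfl⟩, (mem_map' _).2 hv⟩
  rw [degR, degR, this, Set.ncard_image_of_injective _ (Finset.map_injective _)]
  rfl

end SimpleGraph.Iso

instance {V : Type*} (G : SimpleGraph V) [DecidableRel G.Adj] (v : V) :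
    DecidableRel (gcard G v).Adj :=
  fun a b => inferInstanceAs (Decidable (G.Adj a b))

section Card

variable {V : Type*} (G : SimpleGraph V) (v : V)

theorem image_cliqueSet_gcard (r : ℕ) :
    Finset.map (.subtype (· ≠ v)) '' (gcard G v).cliqueSet r =
      G.cliqueSet r ∩ {s | v ∉ s} := by
  classical
  ext s
  constructor
  · rintro ⟨t, ht, rfl⟩
    exact ⟨(isNClique_induce_iff _ t r).1 ht, by simp⟩
  · rintro ⟨hs, hv : v ∉ s⟩
    have hmap : (s.subtype (· ≠ v)).map (.subtype _) = s := by
      rw [subtype_map, filter_true_of_mem]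
      rintro x hx rfl
      exact hv hx
    have hs' : G.IsNClique r ((s.subtype (· ≠ v)).map (.subtype _)) := by
      rw [hmap]; exact hs
    exact ⟨s.subtype (· ≠ v), (isNClique_induce_iff _ _ r).2 hs', hmap⟩

theorem kappa_gcard (r : ℕ) : kappa (gcard G v) r = (G.cliqueSet r ∩ {s | v ∉ s}).ncard := by
  rw [kappa, ← image_cliqueSet_gcard, Set.ncard_image_of_injective _ (Finset.map_injective _)]

theorem kappa_gcard_add_degR [Finite V] (r : ℕ) :
    kappa (gcard G v) r + degR G r v = kappa G r := by
  rw [kappa_gcard, add_comm]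
  exact Set.ncard_inter_add_ncard_sdiff_eq_ncard _ _

theorem degR_gcard_of_not_adj (r : ℕ) (x : {x // x ≠ v}) (h : ¬G.Adj v x) :
    degR (gcard G v) r x = degR G r x := by
  have hpre : {t | x ∈ t} = Finset.map (.subtype (· ≠ v)) ⁻¹' {s | x.1 ∈ s} := by
    ext t; exact (mem_map' (Function.Embedding.subtype (· ≠ v))).symm
  have hclique :
      G.cliqueSet r ∩ {s | v ∉ s} ∩ {s | x.1 ∈ s} = G.cliqueSet r ∩ {s | x.1 ∈ s} := by
    ext s
    simp only [Set.mem_inter_iff, Set.mem_ofPred_eq, mem_cliqueSet_iff, and_congr_left_iff]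
    intro hx
    refine ⟨And.left, fun hs => ⟨hs, fun hv => h (hs.1 hv hx (Ne.symm x.2))⟩⟩
  change ((gcard G v).cliqueSet r ∩ {t | x ∈ t}).ncard = (G.cliqueSet r ∩ {s | x.1 ∈ s}).ncard
  rw [hpre, ← Set.ncard_image_of_injective _ (Finset.map_injective (.subtype (· ≠ v))),
    Set.image_inter_preimage, image_cliqueSet_gcard, hclique]

variable [Fintype V] [DecidableEq V] [DecidableRel G.Adj]

theorem degree_gcard (x : {x // x ≠ v}) :
    (gcard G v).degree x = #((G.neighborFinset x).erase v) := by
  rw [← card_neighborFinset_eq_degree, ← card_map (.subtype (· ≠ v))]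
  congr 1
  ext y
  simp only [mem_map, mem_neighborFinset, mem_erase, Function.Embedding.coe_subtype]
  constructor
  · rintro ⟨z, hz, rfl⟩
    exact ⟨z.2, hz⟩
  · rintro ⟨hyv, hy⟩
    exact ⟨⟨y, hyv⟩, hy, rfl⟩

theorem degree_gcard_add_one_of_adj (x : {x // x ≠ v}) (h : G.Adj v x) :
    (gcard G v).degree x + 1 = G.degree x := by
  rw [degree_gcard, card_erase_add_one (by simpa using h.symm), card_neighborFinset_eq_degree]

theorem degree_gcard_of_not_adj (x : {x // x ≠ v}) (h : ¬G.Adj v x) :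
    (gcard G v).degree x = G.degree x := by
  rw [degree_gcard, erase_eq_of_notMem (by simpa [adj_comm] using h),
    card_neighborFinset_eq_degree]

theorem card_edgeFinset_gcard_add_degree :
    #(gcard G v).edgeFinset + G.degree v = #G.edgeFinset := by
  have h := G.card_edgeFinset_induce_compl_singleton v
  rw [card_edgeFinset_deleteIncidenceSet] at h
  have hle : G.degree v ≤ #G.edgeFinset := by
    rw [← card_incidenceFinset_eq_degree]; exact card_le_card (G.incidenceFinset_subset v)
  change #(G.induce {v}ᶜ).edgeFinset + G.degree v = #G.edgeFinset
  omega

end Card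

theorem deg_eq_degree {V : Type*} (G : SimpleGraph V) (v : V) [Fintype (G.neighborSet v)] :
    deg G v = G.degree v := by
  rw [deg, ← card_neighborSet_eq_degree, Set.ncard_eq_toFinset_card', Set.toFinset_card]

section Counting

variable {V : Type*} (G : SimpleGraph V) [Fintype V] [DecidableRel G.Adj]

theorem sum_degree_eq_mul_card_of_le_one {d : ℕ} (hmax : ∀ v, G.degree v ≤ d) (hd : d ≤ 1) :
    ∑ v, G.degree v = d * #{v | G.degree v = d} := by
  rw [card_filter, mul_sum]
  refine sum_congr rfl fun v _ => ?_
  have := hmax v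
  split_ifs with h <;> omega

variable [DecidableEq V]

theorem kappa_eq_card_cliqueFinset (r : ℕ) : kappa G r = #(G.cliqueFinset r) := by
  rw [kappa, ← coe_cliqueFinset, Set.ncard_coe_finset]

theorem degR_eq_card_filter (r : ℕ) (v : V) : degR G r v = #{s ∈ G.cliqueFinset r | v ∈ s} := by
  rw [degR, ← Set.ncard_coe_finset]
  congr 1
  ext s
  simp

theorem sum_degR (r : ℕ) : ∑ v, degR G r v = r * kappa G r := by
  have h := sum_card_bipartiteAbove_eq_sum_card_bipartiteBelow (s := univ)
    (t := G.cliqueFinset r) (r := fun v s => v ∈ s)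
  simp only [bipartiteAbove, bipartiteBelow, filter_mem_eq_inter, univ_inter] at h
  simp only [degR_eq_card_filter, h, kappa_eq_card_cliqueFinset]
  rw [sum_congr rfl fun s hs => (mem_cliqueFinset_iff.1 hs).2, sum_const, smul_eq_mul, mul_comm]

theorem sum_card_edgeFinset_gcard :
    ∑ v, #(gcard G v).edgeFinset + 2 * #G.edgeFinset = Fintype.card V * #G.edgeFinset := by
  rw [← sum_degrees_eq_twice_card_edges, ← sum_add_distrib,
    sum_congr rfl fun v _ => card_edgeFinset_gcard_add_degree G v, sum_const, card_univ,
    smul_eq_mul]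

end Counting

section DegRSum

variable {V W : Type*} [Fintype V] [Fintype W]

noncomputable def degRSum (G : SimpleGraph V) [DecidableRel G.Adj] (r d : ℕ) : ℕ :=
  ∑ v with G.degree v = d, degR G r v

theorem SimpleGraph.Iso.degRSum_eq {G : SimpleGraph V} {G' : SimpleGraph W}
    [DecidableRel G.Adj] [DecidableRel G'.Adj] (e : G ≃g G') (r d : ℕ) :
    degRSum G' r d = degRSum G r d := by
  simp only [degRSum, sum_filter]
  exact (Fintype.sum_equiv e.toEquiv _ _ fun v => by simp [e.degree_eq, e.degR_eq]).symm

variable [DecidableEq V] (G : SimpleGraph V) [DecidableRel G.Adj]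

theorem degRSum_gcard {d : ℕ} (hmax : ∀ x, G.degree x ≤ d) (r : ℕ) (v : V) :
    degRSum (gcard G v) r d = ∑ x, if G.degree x = d ∧ Gᶜ.Adj v x then degR G r x else 0 := by
  rw [degRSum, sum_filter, Fintype.sum_eq_add_sum_subtype_ne _ v]
  simp only [compl_adj, ne_eq, not_true_eq_false, false_and, and_false, if_false, zero_add]
  refine sum_congr rfl fun x _ => ?_
  by_cases hx : G.Adj v x
  · have := degree_gcard_add_one_of_adj G v x hx
    have := hmax x
    rw [if_neg (by omega), if_neg (by tauto)]
  · rw [degree_gcard_of_not_adj G v x hx, degR_gcard_of_not_adj G v r x hx]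
    simp [hx, Ne.symm x.2]

theorem sum_degRSum_gcard {d : ℕ} (hmax : ∀ x, G.degree x ≤ d)
    (hclique : G.IsClique {x | G.degree x = d}) {u : V} (hu : G.degree u = d) (r : ℕ) :
    ∑ v : {x // x ≠ u}, degRSum (gcard G v) r d = (Fintype.card V - 1 - d) * degRSum G r d := by
  have hu0 : degRSum (gcard G u) r d = 0 := by
    rw [degRSum_gcard G hmax]
    refine sum_eq_zero fun x _ => if_neg ?_
    rintro ⟨hx, hxu, hadj⟩
    exact hadj (hclique hu hx hxu)
  have hcompl (x : V) : #{v | Gᶜ.Adj v x} = Fintype.card V - 1 - G.degree x := by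
    rw [← degree_compl, ← card_neighborFinset_eq_degree, neighborFinset_eq_filter]
    simp only [adj_comm]
  calc ∑ v : {x // x ≠ u}, degRSum (gcard G v) r d
      = ∑ v, ∑ x, if G.degree x = d ∧ Gᶜ.Adj v x then degR G r x else 0 := by
        rw [← sum_congr rfl fun v _ => degRSum_gcard G hmax r v,
          Fintype.sum_eq_add_sum_subtype_ne (fun v => degRSum (gcard G v) r d) u, hu0, zero_add]
    _ = ∑ x, ∑ v, if G.degree x = d ∧ Gᶜ.Adj v x then degR G r x else 0 := sum_comm
    _ = ∑ x, if G.degree x = d then (Fintype.card V - 1 - d) * degR G r x else 0 := by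
        refine sum_congr rfl fun x _ => ?_
        split_ifs with hx
        · simp_rw [hx, true_and, ← sum_filter, sum_const, hcompl, hx, smul_eq_mul]
        · simp [hx]
    _ = (Fintype.card V - 1 - d) * degRSum G r d := by
        simp only [degRSum, sum_filter, mul_sum, mul_ite, mul_zero]

theorem sum_kappa_gcard_of_degree_ne {d : ℕ} {u : V} (hu : G.degree u = d) (r : ℕ) :
    (∑ v : {x // x ≠ u}, if G.degree v ≠ d then kappa (gcard G v) r else 0)
        + (r + #{v | G.degree v = d}) * kappa G r
      = Fintype.card V * kappa G r + degRSum G r d := by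
  have hpoint (v : V) :
      ((if G.degree v ≠ d then kappa (gcard G v) r else 0) + degR G r v)
          + (if G.degree v = d then kappa G r else 0)
        = kappa G r + (if G.degree v = d then degR G r v else 0) := by
    by_cases hv : G.degree v = d
    · simp [hv, add_comm]
    · simp [hv, kappa_gcard_add_degR]
  have hsum := sum_congr rfl fun v (_ : v ∈ univ) => hpoint v
  have hcards : ∑ v, (if G.degree v ≠ d then kappa (gcard G v) r else 0)
      = ∑ v : {x // x ≠ u}, if G.degree v ≠ d then kappa (gcard G v) r else 0 := by
    rw [Fintype.sum_eq_add_sum_subtype_ne _ u, if_neg (not_not.2 hu), zero_add]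
  have hcount : ∑ v, (if G.degree v = d then kappa G r else 0)
      = #{v | G.degree v = d} * kappa G r := by
    rw [← sum_filter, sum_const, smul_eq_mul]
  rw [sum_add_distrib, sum_add_distrib, sum_add_distrib, sum_degR, hcards, hcount, sum_const,
    card_univ, smul_eq_mul, ← sum_filter (fun x => G.degree x = d), ← degRSum] at hsum
  linarith

end DegRSum

namespace ShareCardsVia

variable {n : ℕ} {G H : SimpleGraph (Fin n)} [DecidableRel G.Adj] [DecidableRel H.Adj]
  {u w : Fin n} {π : {x : Fin n // x ≠ u} ≃ {y : Fin n // y ≠ w}}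

theorem card_edgeFinset_eq (h : ShareCardsVia G H u w π) (hdeg : G.degree u = H.degree w)
    (hn : n ≠ 3) : #G.edgeFinset = #H.edgeFinset := by
  have hcards : ∑ v : {x // x ≠ u}, #(gcard G v).edgeFinset
      = ∑ y : {y // y ≠ w}, #(gcard H y).edgeFinset :=
    Fintype.sum_equiv π _ _ fun v => (h v).some.card_edgeFinset_eq
  have hG := sum_card_edgeFinset_gcard G
  have hH := sum_card_edgeFinset_gcard H
  rw [Fintype.sum_eq_add_sum_subtype_ne _ u, Fintype.card_fin] at hG
  rw [Fintype.sum_eq_add_sum_subtype_ne _ w, Fintype.card_fin] at hH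
  have hGu := card_edgeFinset_gcard_add_degree G u
  have hHw := card_edgeFinset_gcard_add_degree H w
  have key : ((n : ℤ) - 3) * (#G.edgeFinset - #H.edgeFinset) = 0 := by
    zify at hG hH hGu hHw hcards hdeg
    linear_combination hH - hG + hGu - hHw + hcards - hdeg
  have hn' : (n : ℤ) - 3 ≠ 0 := by omega
  exact_mod_cast sub_eq_zero.1 ((mul_eq_zero.1 key).resolve_left hn')

theorem degree_eq (h : ShareCardsVia G H u w π) (hE : #G.edgeFinset = #H.edgeFinset)
    (v : {x // x ≠ u}) : G.degree v = H.degree (π v) := by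
  have hG := card_edgeFinset_gcard_add_degree G v
  have hH := card_edgeFinset_gcard_add_degree H (π v)
  rw [(h v).some.card_edgeFinset_eq] at hG
  omega

theorem degRSum_eq (h : ShareCardsVia G H u w π) {d : ℕ} (hGd : ∀ x, G.degree x ≤ d)
    (hHd : ∀ x, H.degree x ≤ d) (hcliqueG : G.IsClique {x | G.degree x = d})
    (hcliqueH : H.IsClique {x | H.degree x = d}) (hu : G.degree u = d) (hw : H.degree w = d)
    (hdn : d + 2 ≤ n) (r : ℕ) : degRSum G r d = degRSum H r d := by
  have hcards : ∑ v : {x // x ≠ u}, degRSum (gcard G v) r d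
      = ∑ y : {y // y ≠ w}, degRSum (gcard H y) r d :=
    Fintype.sum_equiv π _ _ fun v => ((h v).some.degRSum_eq r d).symm
  rw [sum_degRSum_gcard G hGd hcliqueG hu, sum_degRSum_gcard H hHd hcliqueH hw,
    Fintype.card_fin] at hcards
  exact Nat.eq_of_mul_eq_mul_left (by omega) hcards

theorem kappa_eq (h : ShareCardsVia G H u w π)
    (hdeg : ∀ v : {x // x ≠ u}, G.degree v = H.degree (π v)) {d : ℕ} (hu : G.degree u = d)
    (hw : H.degree w = d) {r : ℕ}
    (hdegRSum : degRSum G r d = degRSum H r d)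
    (hcard : #{v | G.degree v = d} = #{v | H.degree v = d})
    (hn : n ≠ r + #{v | G.degree v = d}) : kappa G r = kappa H r := by
  have hcards : (∑ v : {x // x ≠ u}, if G.degree v ≠ d then kappa (gcard G v) r else 0)
      = ∑ y : {y // y ≠ w}, if H.degree y ≠ d then kappa (gcard H y) r else 0 :=
    Fintype.sum_equiv π _ _ fun v => by rw [hdeg v, (h v).some.kappa_eq]
  have hG := sum_kappa_gcard_of_degree_ne G hu r
  have hH := sum_kappa_gcard_of_degree_ne H hw r
  rw [hcards, Fintype.card_fin] at hG
  rw [Fintype.card_fin, ← hcard, ← hdegRSum] at hH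
  have key : ((r : ℤ) + #{v | G.degree v = d} - n) * (kappa G r - kappa H r) = 0 := by
    generalize #{v | G.degree v = d} = c at hG hH
    zify at hG hH
    linear_combination hG - hH
  have hn' : (r : ℤ) + #{v | G.degree v = d} - n ≠ 0 := by omega
  exact_mod_cast sub_eq_zero.1 ((mul_eq_zero.1 key).resolve_left hn')

end ShareCardsVia

theorem clique_count_of_maxDeg_clique {n : ℕ}
    (G H : SimpleGraph (Fin n)) (u w : Fin n)
    (π : {x : Fin n // x ≠ u} ≃ {y : Fin n // y ≠ w})
    (hshare : ShareCardsVia G H u w π)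
    (hDelta : maxDeg G = maxDeg H) (hDeltan : maxDeg G ≤ n - 2)
    (hcliqueG : G.IsClique {v : Fin n | deg G v = maxDeg G})
    (hcliqueH : H.IsClique {v : Fin n | deg H v = maxDeg H})
    (hu : deg G u = maxDeg G) (hw : deg H w = maxDeg H)
    (l : ℕ) (hlG : numMaxDeg G = l) (hlH : numMaxDeg H = l) :
    ∀ r : ℕ, 1 ≤ r → n ≠ l + r → kappa G r = kappa H r := by
  classical
  intro r _ hnr
  obtain rfl | hn1 := eq_or_ne n 1
  · rw [Subsingleton.elim G H]
  simp only [numMaxDeg, deg_eq_degree, ← hDelta] at hu hw hcliqueG hcliqueH hlG hlH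
  have hGmax (v : Fin n) : G.degree v ≤ maxDeg G := deg_eq_degree G v ▸ le_sup (mem_univ v)
  have hHmax (v : Fin n) : H.degree v ≤ maxDeg G :=
    hDelta ▸ deg_eq_degree H v ▸ le_sup (mem_univ v)
  have hE : #G.edgeFinset = #H.edgeFinset := by
    rcases le_or_gt (maxDeg G) 1 with hD | hD
    · have hG := sum_degree_eq_mul_card_of_le_one G hGmax hD
      have hH := sum_degree_eq_mul_card_of_le_one H hHmax hD
      rw [sum_degrees_eq_twice_card_edges, hlG] at hG
      rw [sum_degrees_eq_twice_card_edges, hlH] at hH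
      omega
    · exact hshare.card_edgeFinset_eq (hu.trans hw.symm) (by omega)
  have hdegRSum := hshare.degRSum_eq hGmax hHmax hcliqueG hcliqueH hu hw
    (by have := u.pos; omega) r
  exact hshare.kappa_eq (hshare.degree_eq hE) hu hw hdegRSum (hlG.trans hlH.symm)
    (by rw [hlG]; omega)
end

section
/- Let n ≥ 7 and let G and H be simple graphs on n vertices that share n−1 cards. If Δ(G) = n−1, then for every integer r with 1 ≤ r ≤ n−1 we have κ_r(G) = κ_r(H). -/
open SimpleGraph

/-!
Extend the matching of cards to a bijection `σ` with `σ u = w`, where `G - u` and `H - w` are the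
unmatched cards. Deleting `v` loses exactly the cliques through `v`, so summing over the matched
cards gives Kelly's identity `(n - 1 - r) (κ_r G - κ_r H) = #{r-cliques of H through w} -
#{r-cliques of G through u}`; for `r = 2` the edge difference `d = κ₂ G - κ₂ H` satisfies
`(n - 3) d = deg_H w - deg_G u` and `deg_G v = deg_H (σ v) + d` for `v ≠ u`.

A universal vertex `x` gives `κ_{r+1} G = κ_{r+1} (G - x) + κ_r (G - x)`. If `d = 0`, then `σ x` is
universal in `H`, and `G - x`, `H - σ x` have the same clique counts: they are isomorphic cards if
`x ≠ u`, and if `x = u` Kelly's identity determines the clique counts of `G - u` one `r` at a time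
(the spanning clique through the edge count).

It remains to rule out `d ≠ 0`, using that the number of universal vertices of `G - v` is the number
of universal vertices of `G` other than `v` plus the number of vertices whose only non-neighbour is
`v`. If `d > 0`, then `d = 1` and `deg_G u ≤ 2`, so `G` has `k ≤ 2` universal vertices, all distinct
from `u`. Comparing the cards at a universal vertex shows that `H` has fewer than `k` universal
vertices; comparing them at each of the `n - 1 - k` other vertices `v ≠ u` yields a vertex of `H`
whose only non-neighbour is `σ v`. Such a vertex has degree `n - 2`, so it is the image of `u` or
of a universal vertex of `G`, whence `n ≤ 2 k + 2 ≤ 6`. If `d < 0`, then `u` is the only universal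
vertex of `G` and `deg_H w ≤ 2`. Either `H` has a universal vertex, and swapping `G` and `H` brings
back the case `d > 0`, or every `q ≠ w` is the only non-neighbour of a vertex of `H`, which avoids
both `w` and a non-neighbour of `w`: `n - 1` such vertices do not fit.
-/

namespace SimpleGraph

variable {V W : Type*} {K : SimpleGraph V} {L : SimpleGraph W}

theorem Iso.kappa_eq_s8 (e : K ≃g L) (r : ℕ) : kappa K r = kappa L r := by
  have hL : K.map e.toEquiv = L := by
    ext a b
    obtain ⟨a, rfl⟩ := e.surjective a
    obtain ⟨b, rfl⟩ := e.surjective b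
    exact (map_adj_apply (f := e.toEquiv.toEmbedding)).trans e.map_adj_iff.symm
  rw [kappa, kappa, ← hL, cliqueSet_map_of_equiv,
    Set.ncard_image_of_injective _ (Finset.map_injective _)]

theorem kappa_zero : kappa K 0 = 1 := by
  rw [kappa, cliqueSet_zero, Set.ncard_singleton]

theorem kappa_one : kappa K 1 = Nat.card V := by
  rw [kappa, cliqueSet_one, Set.ncard_range_of_injective Finset.singleton_injective]

theorem kappa_eq_card_cliqueFinset [Fintype V] [DecidableEq V] [DecidableRel K.Adj] (r : ℕ) :
    kappa K r = (K.cliqueFinset r).card := by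
  rw [kappa, ← coe_cliqueFinset, Set.ncard_coe_finset]

theorem kappa_eq_zero_of_card_lt [Fintype V] {r : ℕ} (hr : Fintype.card V < r) :
    kappa K r = 0 := by
  rw [kappa, cliqueSet_eq_empty_iff.2 (cliqueFree_of_card_lt hr), Set.ncard_empty]

theorem kappa_induce (s : Set V) (r : ℕ) :
    kappa (K.induce s) r = {t | t ∈ K.cliqueSet r ∧ ↑t ⊆ s}.ncard := by
  classical
  have himage : Finset.map (.subtype (· ∈ s)) '' (K.induce s).cliqueSet r =
      {t | t ∈ K.cliqueSet r ∧ ↑t ⊆ s} := by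
    ext t
    simp only [Set.mem_image, mem_cliqueSet_iff, isNClique_induce_iff]
    constructor
    · rintro ⟨t, ht, rfl⟩
      refine ⟨ht, fun z hz => ?_⟩
      obtain ⟨y, -, rfl⟩ := Finset.mem_map.1 hz
      exact y.2
    · rintro ⟨ht, hts⟩
      exact ⟨t.subtype (· ∈ s), by rwa [Finset.subtype_map_of_mem hts],
        Finset.subtype_map_of_mem hts⟩
  rw [kappa, ← himage, Set.ncard_image_of_injective _ (Finset.map_injective _)]

theorem kappa_gcard_add_degR [Finite V] (v : V) (r : ℕ) :
    kappa (gcard K v) r + degR K r v = kappa K r := by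
  rw [gcard, kappa_induce, degR, kappa, ← Set.ncard_union_eq]
  · congr 1
    ext t
    by_cases hv : v ∈ t <;> simp [hv, Set.subset_def]
  · exact Set.disjoint_left.2 fun t ht ht' => by simpa using ht.2 ht'.2

theorem degR_succ (x : V) (r : ℕ) :
    degR K (r + 1) x = kappa (K.induce (K.neighborSet x)) r := by
  classical
  have himage : (fun s => s.erase x) '' {s | s ∈ K.cliqueSet (r + 1) ∧ x ∈ s} =
      {t | t ∈ K.cliqueSet r ∧ ↑t ⊆ K.neighborSet x} := by
    ext t
    constructor
    · rintro ⟨s, ⟨hs, hxs⟩, rfl⟩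
      refine ⟨hs.erase_of_mem hxs, fun z hz => ?_⟩
      rw [Finset.mem_coe, Finset.mem_erase] at hz
      exact hs.isClique hxs hz.2 (Ne.symm hz.1)
    · rintro ⟨ht, htx⟩
      have hxt : x ∉ t := fun h => K.loopless.irrefl x (htx h)
      exact ⟨insert x t, ⟨ht.insert fun z hz => htx hz, Finset.mem_insert_self x t⟩,
        Finset.erase_insert hxt⟩
  rw [degR, kappa_induce, ← himage, Set.InjOn.ncard_image]
  rintro s ⟨-, hs⟩ s' ⟨-, hs'⟩ h
  rw [← Finset.insert_erase hs, ← Finset.insert_erase hs']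
  exact congrArg (insert x) h

theorem IsUniversal.degR_succ {x : V} (hx : K.IsUniversal x) (r : ℕ) :
    degR K (r + 1) x = kappa (gcard K x) r := by
  rw [SimpleGraph.degR_succ, hx.neighborSet_eq]
  rfl

theorem degR_two (x : V) : degR K 2 x = deg K x := by
  rw [degR_succ, kappa_one]
  rfl

theorem sum_degR [Fintype V] (r : ℕ) : ∑ v, degR K r v = r * kappa K r := by
  classical
  have hdegR (v : V) : degR K r v = ((K.cliqueFinset r).filter (v ∈ ·)).card := by
    rw [degR, ← Set.ncard_coe_finset]
    congr 1
    ext s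
    simp
  simp_rw [hdegR, kappa_eq_card_cliqueFinset]
  have := Finset.sum_card_bipartiteAbove_eq_sum_card_bipartiteBelow
    (s := Finset.univ) (t := K.cliqueFinset r) (r := fun v s => v ∈ s)
  simp only [Finset.bipartiteAbove, Finset.bipartiteBelow, Finset.filter_mem_eq_inter,
    Finset.univ_inter] at this
  rw [this, Finset.sum_congr rfl fun s hs => (mem_cliqueFinset_iff.1 hs).card_eq,
    Finset.sum_const, smul_eq_mul, mul_comm]

theorem sum_kappa_gcard_add [Fintype V] [DecidableEq V] (u : V) (r : ℕ) :
    ∑ v ∈ Finset.univ.erase u, kappa (gcard K v) r + r * kappa K r =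
      (Fintype.card V - 1) * kappa K r + degR K r u := by
  have hcards : ∑ v ∈ Finset.univ.erase u, (kappa (gcard K v) r + degR K r v) =
      (Fintype.card V - 1) * kappa K r := by
    simp [kappa_gcard_add_degR, Finset.card_erase_of_mem]
  rw [Finset.sum_add_distrib] at hcards
  rw [← sum_degR, ← Finset.sum_erase_add _ _ (Finset.mem_univ u)]
  omega

theorem IsUniversal.kappa_succ [Finite V] {x : V} (hx : K.IsUniversal x) (r : ℕ) :
    kappa K (r + 1) = kappa (gcard K x) (r + 1) + kappa (gcard K x) r := by
  rw [← kappa_gcard_add_degR x, hx.degR_succ]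

theorem kappa_eq_of_isUniversal [Finite V] [Finite W] {x : V} {y : W}
    (hx : K.IsUniversal x) (hy : L.IsUniversal y)
    (h : ∀ r, kappa (gcard K x) r = kappa (gcard L y) r) (r : ℕ) : kappa K r = kappa L r := by
  cases r with
  | zero => rw [kappa_zero, kappa_zero]
  | succ r => rw [hx.kappa_succ, hy.kappa_succ, h, h]

open Classical in
theorem kappa_card_eq_ite [Fintype V] :
    kappa K (Fintype.card V) = if K = ⊤ then 1 else 0 := by
  have hsub : K.cliqueSet (Fintype.card V) ⊆ {Finset.univ} :=
    fun s hs => Finset.eq_univ_of_card s hs.card_eq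
  have huniv : Finset.univ ∈ K.cliqueSet (Fintype.card V) ↔ K = ⊤ := by
    rw [mem_cliqueSet_iff, isNClique_iff, Finset.coe_univ, isClique_univ, Finset.card_univ,
      and_iff_left rfl]
  split_ifs with hK
  · rw [kappa, (Set.subset_singleton_iff_eq.1 hsub).resolve_left
      (Set.nonempty_iff_ne_empty.1 ⟨_, huniv.2 hK⟩), Set.ncard_singleton]
  · rw [kappa, Set.ncard_eq_zero, Set.eq_empty_iff_forall_notMem]
    intro s hs
    exact hK (huniv.1 (hsub hs ▸ hs))

theorem kappa_two_eq_choose_iff [Fintype V] :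
    kappa K 2 = (Fintype.card V).choose 2 ↔ K = ⊤ := by
  classical
  have hsub : K.cliqueFinset 2 ⊆ Finset.powersetCard 2 Finset.univ := fun s hs =>
    Finset.mem_powersetCard.2 ⟨Finset.subset_univ s, (mem_cliqueFinset_iff.1 hs).card_eq⟩
  rw [kappa_eq_card_cliqueFinset, ← Finset.card_univ, ← Finset.card_powersetCard]
  constructor
  · intro h
    have heq := Finset.eq_of_subset_of_card_le hsub h.ge
    refine eq_top_iff_forall_ne_adj.2 fun a b hab => ?_
    have hab2 : {a, b} ∈ K.cliqueFinset 2 :=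
      heq ▸ Finset.mem_powersetCard.2 ⟨Finset.subset_univ _, Finset.card_pair hab⟩
    exact (mem_cliqueFinset_iff.1 hab2).isClique (by simp) (by simp) hab
  · intro hK
    refine congrArg Finset.card (Finset.Subset.antisymm hsub fun s hs => ?_)
    exact mem_cliqueFinset_iff.2
      ⟨(isClique_univ.2 hK).subset (Set.subset_univ _), (Finset.mem_powersetCard.1 hs).2⟩

theorem kappa_card_eq_of_kappa_two_eq [Fintype V] [Fintype W]
    (hcard : Fintype.card V = Fintype.card W) (h : kappa K 2 = kappa L 2) :
    kappa K (Fintype.card V) = kappa L (Fintype.card W) := by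
  have htop : K = ⊤ ↔ L = ⊤ := by
    rw [← kappa_two_eq_choose_iff, ← kappa_two_eq_choose_iff, h, hcard]
  classical
  rw [kappa_card_eq_ite, kappa_card_eq_ite]
  exact if_congr htop rfl rfl

theorem deg_eq_degree [Fintype V] [DecidableRel K.Adj] (v : V) : deg K v = K.degree v := by
  rw [← card_neighborSet_eq_degree, ← Nat.card_eq_fintype_card]
  rfl

theorem deg_add_deg_compl [Fintype V] (v : V) : deg K v + deg Kᶜ v = Fintype.card V - 1 := by
  classical
  rw [deg_eq_degree, deg_eq_degree, degree_compl]
  have := K.degree_lt_card_verts v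
  omega

theorem deg_le_card_sub_one [Fintype V] (v : V) : deg K v ≤ Fintype.card V - 1 := by
  have := K.deg_add_deg_compl v
  omega

theorem deg_eq_card_sub_one_iff [Fintype V] (v : V) :
    deg K v = Fintype.card V - 1 ↔ K.IsUniversal v := by
  classical
  rw [deg_eq_degree, degree_eq_card_sub_one]

theorem isUniversal_iff_compl_neighborSet_eq_empty (v : V) :
    K.IsUniversal v ↔ Kᶜ.neighborSet v = ∅ := by
  rw [neighborSet_eq_empty, isIsolated_compl_iff_isUniversal]

theorem Iso.isUniversal_iff (e : K ≃g L) (x : V) : L.IsUniversal (e x) ↔ K.IsUniversal x := by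
  constructor
  · intro h y hxy
    exact e.map_adj_iff.1 (h (e.injective.ne hxy))
  · intro h y hxy
    obtain ⟨y, rfl⟩ := e.surjective y
    exact e.map_adj_iff.2 (h fun hxy' => hxy (congrArg e hxy'))

theorem Iso.ncard_universalVerts_eq (e : K ≃g L) :
    K.universalVerts.ncard = L.universalVerts.ncard :=
  Nat.card_congr (e.toEquiv.subtypeEquiv fun x => (e.isUniversal_iff x).symm)

theorem isUniversal_gcard_iff {v : V} (z : {x // x ≠ v}) :
    (gcard K v).IsUniversal z ↔ Kᶜ.neighborSet z ⊆ {v} := by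
  constructor
  · intro hz y hy
    by_contra hyv
    rw [mem_neighborSet, compl_adj] at hy
    exact hy.2 (hz (w := ⟨y, hyv⟩) fun h => hy.1 (congrArg Subtype.val h))
  · intro hz y hzy
    by_contra hadj
    exact y.2 (hz ((compl_adj ..).2 ⟨fun h => hzy (Subtype.ext h), hadj⟩))

theorem ncard_universalVerts_gcard [Finite V] (v : V) :
    (gcard K v).universalVerts.ncard =
      (K.universalVerts \ {v}).ncard + {z | Kᶜ.neighborSet z = {v}}.ncard := by
  have himage : Subtype.val '' (gcard K v).universalVerts =
      K.universalVerts \ {v} ∪ {z | Kᶜ.neighborSet z = {v}} := by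
    ext z
    constructor
    · rintro ⟨z, hz, rfl⟩
      rcases Set.subset_singleton_iff_eq.1 ((isUniversal_gcard_iff z).1 hz) with h | h
      · exact Or.inl ⟨(isUniversal_iff_compl_neighborSet_eq_empty _).2 h, z.2⟩
      · exact Or.inr h
    · rintro (⟨hz, hzv⟩ | hz)
      · refine ⟨⟨z, hzv⟩, (isUniversal_gcard_iff _).2 ?_, rfl⟩
        simp [(isUniversal_iff_compl_neighborSet_eq_empty z).1 hz]
      · have hvz : Kᶜ.Adj z v := show v ∈ Kᶜ.neighborSet z from hz ▸ rfl
        exact ⟨⟨z, hvz.ne⟩, (isUniversal_gcard_iff _).2 hz.subset, rfl⟩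
  have hdisj : Disjoint (K.universalVerts \ {v}) {z | Kᶜ.neighborSet z = {v}} := by
    refine Set.disjoint_left.2 fun z hz hz' => ?_
    have := (isUniversal_iff_compl_neighborSet_eq_empty z).1 hz.1
    rw [Set.mem_ofPred_eq, this] at hz'
    exact Set.singleton_ne_empty v hz'.symm
  rw [← Set.ncard_union_eq hdisj, ← himage, Set.ncard_image_of_injective _ Subtype.val_injective]

theorem IsUniversal.ncard_universalVerts_gcard_add_one [Finite V] {v : V}
    (hv : K.IsUniversal v) :
    (gcard K v).universalVerts.ncard + 1 = K.universalVerts.ncard := by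
  have hnone : {z | Kᶜ.neighborSet z = {v}} = ∅ := by
    refine Set.eq_empty_of_forall_notMem fun z hz => ?_
    have hzv : Kᶜ.Adj z v := show v ∈ Kᶜ.neighborSet z from hz ▸ rfl
    exact ((compl_adj ..).1 hzv).2 (hv hzv.ne.symm).symm
  rw [ncard_universalVerts_gcard, hnone, Set.ncard_empty, add_zero,
    Set.ncard_sdiff_singleton_add_one hv]

theorem ncard_le_ncard_of_forall_exists_compl_neighborSet_eq [Finite V] {S T : Set V}
    (h : ∀ q ∈ S, ∃ z ∈ T, Kᶜ.neighborSet z = {q}) : S.ncard ≤ T.ncard := by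
  choose! f hfT hf using h
  refine Set.ncard_le_ncard_of_injOn f hfT fun q hq q' hq' hqq' => ?_
  exact Set.singleton_eq_singleton_iff.1 ((hf q hq).symm.trans (hqq' ▸ hf q' hq'))

end SimpleGraph

/-- The matching of `ShareCardsVia`, extended to a bijection of the vertex sets by `u ↦ w`. -/
def ShareCardsAlong {V W : Type*} (G : SimpleGraph V) (H : SimpleGraph W) (σ : V ≃ W) (u : V) :
    Prop :=
  ∀ v, v ≠ u → Nonempty (gcard G v ≃g gcard H (σ v))

theorem ShareCards.exists_shareCardsAlong {n : ℕ} {G H : SimpleGraph (Fin n)}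
    (h : ShareCards G H) : ∃ (σ : Fin n ≃ Fin n) (u : Fin n), ShareCardsAlong G H σ u := by
  obtain ⟨u, w, π, hπ⟩ := h
  refine ⟨(Equiv.optionSubtypeNe u).symm.trans (π.optionCongr.trans (Equiv.optionSubtypeNe w)),
    u, fun v hv => ?_⟩
  have hσv : Equiv.optionSubtypeNe w (π.optionCongr ((Equiv.optionSubtypeNe u).symm v)) =
      π ⟨v, hv⟩ := by
    rw [Equiv.optionSubtypeNe_symm_of_ne hv, Equiv.optionCongr_apply, Option.map_some,
      Equiv.optionSubtypeNe_some]
  rw [Equiv.trans_apply, Equiv.trans_apply, hσv]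
  exact hπ ⟨v, hv⟩

namespace ShareCardsAlong

open SimpleGraph

variable {V W : Type*} {G : SimpleGraph V} {H : SimpleGraph W} {σ : V ≃ W} {u : V}

theorem symm (h : ShareCardsAlong G H σ u) : ShareCardsAlong H G σ.symm (σ u) := by
  intro q hq
  have hq' : σ.symm q ≠ u := fun h' => hq (by rw [← h', Equiv.apply_symm_apply])
  obtain ⟨e⟩ := h _ hq'
  rw [Equiv.apply_symm_apply] at e
  exact ⟨e.symm⟩

theorem kappa_add_degR [Finite V] [Finite W] (h : ShareCardsAlong G H σ u) {v : V} (hv : v ≠ u)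
    (r : ℕ) : kappa G r + degR H r (σ v) = kappa H r + degR G r v := by
  obtain ⟨e⟩ := h v hv
  rw [← kappa_gcard_add_degR (K := G) v, ← kappa_gcard_add_degR (K := H) (σ v), e.kappa_eq_s8]
  ring

theorem kappa_two_add_deg [Finite V] [Finite W] (h : ShareCardsAlong G H σ u) {v : V}
    (hv : v ≠ u) : kappa G 2 + deg H (σ v) = kappa H 2 + deg G v := by
  simpa only [degR_two] using h.kappa_add_degR hv 2

/-- Kelly's lemma for a deck with one card missing. -/
theorem card_sub_one_sub_mul [Fintype V] [Fintype W] (h : ShareCardsAlong G H σ u) (r : ℕ) :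
    ((Fintype.card V : ℤ) - 1 - r) * (kappa G r - kappa H r) = degR H r (σ u) - degR G r u := by
  classical
  have hsum : ∑ v ∈ Finset.univ.erase u, kappa (gcard G v) r =
      ∑ q ∈ Finset.univ.erase (σ u), kappa (gcard H q) r :=
    Finset.sum_equiv σ (by simp) fun v hv => (h v (Finset.ne_of_mem_erase hv)).some.kappa_eq_s8 r
  have hG := sum_kappa_gcard_add (K := G) u r
  have hH := sum_kappa_gcard_add (K := H) (σ u) r
  rw [hsum] at hG
  rw [← Fintype.card_congr σ] at hH
  have hpos : 1 ≤ Fintype.card V := Fintype.card_pos_iff.2 ⟨u⟩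
  zify [hpos] at hG hH
  linear_combination hH - hG

theorem card_sub_three_mul [Fintype V] [Fintype W] (h : ShareCardsAlong G H σ u) :
    ((Fintype.card V : ℤ) - 3) * (kappa G 2 - kappa H 2) = deg H (σ u) - deg G u := by
  have := h.card_sub_one_sub_mul 2
  rw [degR_two, degR_two] at this
  linear_combination this

theorem kappa_gcard_eq_of_le [Fintype V] [Fintype W] (h : ShareCardsAlong G H σ u)
    (hu : G.IsUniversal u) (hw : H.IsUniversal (σ u)) {r : ℕ}
    (hr : r ≤ Fintype.card V - 2) : kappa (gcard G u) r = kappa (gcard H (σ u)) r := by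
  induction r with
  | zero => rw [kappa_zero, kappa_zero]
  | succ r ih =>
    have ih := ih (by omega)
    have hkelly := h.card_sub_one_sub_mul (r + 1)
    rw [hu.degR_succ, hw.degR_succ, ih, sub_self] at hkelly
    have hG := hu.kappa_succ r
    have hH := hw.kappa_succ r
    have hfactor : (Fintype.card V : ℤ) - 1 - (r + 1 : ℕ) ≠ 0 := by omega
    have := sub_eq_zero.1 ((mul_eq_zero.1 hkelly).resolve_left hfactor)
    omega

theorem kappa_gcard_eq [Fintype V] [Fintype W] (hn : 4 ≤ Fintype.card V)
    (h : ShareCardsAlong G H σ u) (hu : G.IsUniversal u) (hw : H.IsUniversal (σ u)) (r : ℕ) :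
    kappa (gcard G u) r = kappa (gcard H (σ u)) r := by
  classical
  have hcardG : Fintype.card {x // x ≠ u} = Fintype.card V - 1 := by
    simp [Fintype.card_subtype_compl]
  have hcardH : Fintype.card {y // y ≠ σ u} = Fintype.card V - 1 := by
    simp [Fintype.card_subtype_compl, Fintype.card_congr σ]
  rcases lt_trichotomy r (Fintype.card V - 1) with hr | rfl | hr
  · exact h.kappa_gcard_eq_of_le hu hw (by omega)
  · have htop := kappa_card_eq_of_kappa_two_eq (hcardG.trans hcardH.symm)
      (h.kappa_gcard_eq_of_le hu hw (by omega))
    rwa [hcardG, hcardH] at htop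
  · rw [kappa_eq_zero_of_card_lt (by omega), kappa_eq_zero_of_card_lt (by omega)]

theorem exists_compl_neighborSet_eq [Finite V] [Finite W] (h : ShareCardsAlong G H σ u)
    {v : V} (hv : v ≠ u)
    (hlt : (H.universalVerts \ {σ v}).ncard < (G.universalVerts \ {v}).ncard) :
    ∃ z, Hᶜ.neighborSet z = {σ v} := by
  obtain ⟨e⟩ := h v hv
  have hG := ncard_universalVerts_gcard (K := G) v
  have hH := ncard_universalVerts_gcard (K := H) (σ v)
  rw [e.ncard_universalVerts_eq] at hG
  exact Set.nonempty_of_ncard_ne_zero (s := {z | Hᶜ.neighborSet z = {σ v}}) (by omega)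

theorem card_le_of_deg_eq_add_one [Fintype V] [Fintype W] (h : ShareCardsAlong G H σ u)
    (hdeg : ∀ v, v ≠ u → deg G v = deg H (σ v) + 1) {x : V} (hx : G.IsUniversal x)
    (hxu : x ≠ u) : Fintype.card V ≤ 2 * G.universalVerts.ncard + 2 := by
  have hcard : Fintype.card W = Fintype.card V := (Fintype.card_congr σ).symm
  have hdegx := hdeg x hxu
  rw [(deg_eq_card_sub_one_iff x).2 hx] at hdegx
  have hσx : σ x ∉ H.universalVerts := fun hσx => by
    have := (deg_eq_card_sub_one_iff (K := H) (σ x)).2 hσx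
    have : 2 ≤ Fintype.card V := Fintype.one_lt_card_iff.2 ⟨x, u, hxu⟩
    omega
  have hHlt : H.universalVerts.ncard < G.universalVerts.ncard := by
    obtain ⟨e⟩ := h x hxu
    have hH := ncard_universalVerts_gcard (K := H) (σ x)
    rw [Set.sdiff_singleton_eq_self hσx, ← e.ncard_universalVerts_eq] at hH
    have := hx.ncard_universalVerts_gcard_add_one
    omega
  set T := G.universalVerts ∪ {u}
  have hmate : ∀ q ∈ σ '' Tᶜ, ∃ z ∈ σ '' T, Hᶜ.neighborSet z = {q} := by
    rintro _ ⟨v, hv, rfl⟩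
    have hvu : v ≠ u := fun hvu => hv (Or.inr hvu)
    have hvG : v ∉ G.universalVerts := fun hvG => hv (Or.inl hvG)
    obtain ⟨z, hz⟩ := h.exists_compl_neighborSet_eq hvu (by
      rw [Set.sdiff_singleton_eq_self hvG]
      exact (Set.ncard_sdiff_singleton_le ..).trans_lt hHlt)
    refine ⟨z, ⟨σ.symm z, ?_, σ.apply_symm_apply z⟩, hz⟩
    by_contra hzT
    have hz1 : deg Hᶜ z = 1 := by rw [deg, hz, Set.ncard_singleton]
    have hzH := H.deg_add_deg_compl z
    have hzG := hdeg (σ.symm z) fun h' => hzT (Or.inr h')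
    have hzG' := (deg_eq_card_sub_one_iff (K := G) (σ.symm z)).not.2 fun h' => hzT (Or.inl h')
    rw [σ.apply_symm_apply] at hzG
    omega
  have hcount := ncard_le_ncard_of_forall_exists_compl_neighborSet_eq hmate
  rw [Set.ncard_image_of_injective _ σ.injective, Set.ncard_image_of_injective _ σ.injective]
    at hcount
  have hT : T.ncard ≤ G.universalVerts.ncard + 1 :=
    (Set.ncard_union_le _ _).trans (by rw [Set.ncard_singleton])
  have := Set.ncard_add_ncard_compl T
  rw [Nat.card_eq_fintype_card] at this
  omega

theorem kappa_two_le [Fintype V] [Fintype W] (hn : 7 ≤ Fintype.card V)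
    (h : ShareCardsAlong G H σ u) {x : V} (hx : G.IsUniversal x) : kappa G 2 ≤ kappa H 2 := by
  by_contra hlt
  have hcard : Fintype.card W = Fintype.card V := (Fintype.card_congr σ).symm
  have hrel := h.card_sub_three_mul
  have hdw := H.deg_le_card_sub_one (σ u)
  rw [hcard] at hdw
  have hd : kappa G 2 = kappa H 2 + 1 := by
    by_contra hd
    have : (2 : ℤ) ≤ kappa G 2 - kappa H 2 := by omega
    have : ((Fintype.card V : ℤ) - 3) * 2 ≤ deg H (σ u) - deg G u := by
      rw [← hrel]
      exact mul_le_mul_of_nonneg_left this (by omega)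
    omega
  have hdu : deg G u ≤ 2 := by
    rw [hd] at hrel
    push_cast at hrel
    omega
  have hxu : x ≠ u := by
    rintro rfl
    rw [(deg_eq_card_sub_one_iff x).2 hx] at hdu
    omega
  have hk : G.universalVerts.ncard ≤ deg G u := by
    refine Set.ncard_le_ncard fun z hz => (hz fun hzu => ?_).symm
    rw [← hzu, (deg_eq_card_sub_one_iff z).2 hz] at hdu
    omega
  have := h.card_le_of_deg_eq_add_one (fun v hv => by have := h.kappa_two_add_deg hv; omega)
    hx hxu
  omega

theorem exists_isUniversal [Fintype V] [Fintype W] (h : ShareCardsAlong G H σ u)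
    (hu : G.IsUniversal u) (hw : deg H (σ u) + 3 ≤ Fintype.card V) : ∃ z, H.IsUniversal z := by
  by_contra! hno
  have hcard : Fintype.card W = Fintype.card V := (Fintype.card_congr σ).symm
  have hcompl := H.deg_add_deg_compl (σ u)
  have hH : H.universalVerts = ∅ := Set.eq_empty_of_forall_notMem hno
  obtain ⟨a, ha⟩ : (Hᶜ.neighborSet (σ u)).Nonempty :=
    Set.nonempty_iff_ne_empty.2 ((isUniversal_iff_compl_neighborSet_eq_empty _).not.1 (hno _))
  have hmate : ∀ q ∈ ({σ u} : Set W)ᶜ, ∃ z ∈ ({σ u, a} : Set W)ᶜ, Hᶜ.neighborSet z = {q} := by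
    intro q hq
    have hvu : σ.symm q ≠ u := fun h' => hq (by rw [← h', σ.apply_symm_apply]; rfl)
    obtain ⟨z, hz⟩ := h.exists_compl_neighborSet_eq hvu (by
      rw [hH, Set.empty_sdiff, Set.ncard_empty, Set.ncard_pos]
      exact ⟨u, hu, hvu.symm⟩)
    rw [σ.apply_symm_apply] at hz
    refine ⟨z, ?_, hz⟩
    rintro (rfl | rfl)
    · have : deg Hᶜ (σ u) = 1 := by rw [deg, hz, Set.ncard_singleton]
      omega
    · have : σ u ∈ Hᶜ.neighborSet z := (Hᶜ.adj_symm ha)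
      rw [hz] at this
      exact hq this.symm
  have hcount := ncard_le_ncard_of_forall_exists_compl_neighborSet_eq hmate
  have h1 := Set.ncard_add_ncard_compl ({σ u} : Set W)
  have h2 := Set.ncard_add_ncard_compl ({σ u, a} : Set W)
  rw [Set.ncard_singleton, Nat.card_eq_fintype_card] at h1
  rw [Set.ncard_pair (Hᶜ.ne_of_adj ha), Nat.card_eq_fintype_card] at h2
  omega

theorem kappa_two_ge [Fintype V] [Fintype W] (hn : 7 ≤ Fintype.card V)
    (h : ShareCardsAlong G H σ u) {x : V} (hx : G.IsUniversal x) : kappa H 2 ≤ kappa G 2 := by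
  by_contra hlt
  have hcard : Fintype.card W = Fintype.card V := (Fintype.card_congr σ).symm
  have hu : G.IsUniversal u := by
    rcases eq_or_ne x u with rfl | hxu
    · exact hx
    have := h.kappa_two_add_deg hxu
    have := H.deg_le_card_sub_one (σ x)
    rw [(deg_eq_card_sub_one_iff x).2 hx] at *
    omega
  have hrel := h.card_sub_three_mul
  rw [(deg_eq_card_sub_one_iff u).2 hu] at hrel
  have hw : deg H (σ u) + 3 ≤ Fintype.card V := by
    have : ((Fintype.card V : ℤ) - 3) * (kappa G 2 - kappa H 2) ≤ -((Fintype.card V : ℤ) - 3) :=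
      by nlinarith
    omega
  obtain ⟨z, hz⟩ := h.exists_isUniversal hu hw
  exact hlt (h.symm.kappa_two_le (hcard ▸ hn) hz)

theorem kappa_eq_s8 [Fintype V] [Fintype W] (hn : 7 ≤ Fintype.card V)
    (h : ShareCardsAlong G H σ u) {x : V} (hx : G.IsUniversal x) (r : ℕ) :
    kappa G r = kappa H r := by
  have h2 := le_antisymm (h.kappa_two_le hn hx) (h.kappa_two_ge hn hx)
  have hcard : Fintype.card W = Fintype.card V := (Fintype.card_congr σ).symm
  have hσx : H.IsUniversal (σ x) := by
    rw [← deg_eq_card_sub_one_iff, hcard, ← (deg_eq_card_sub_one_iff x).2 hx]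
    rcases eq_or_ne x u with rfl | hxu
    · have := h.card_sub_three_mul
      rw [h2, sub_self, mul_zero] at this
      omega
    · have := h.kappa_two_add_deg hxu
      omega
  rcases eq_or_ne x u with rfl | hxu
  · exact kappa_eq_of_isUniversal hx hσx (h.kappa_gcard_eq (by omega) hx hσx) r
  · obtain ⟨e⟩ := h x hxu
    exact kappa_eq_of_isUniversal hx hσx e.kappa_eq_s8 r

end ShareCardsAlong

theorem exists_isUniversal_of_maxDeg_eq {n : ℕ} {G : SimpleGraph (Fin n)} (hn : 0 < n)
    (h : maxDeg G = n - 1) : ∃ x, G.IsUniversal x := by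
  obtain ⟨x, -, hx⟩ := Finset.exists_mem_eq_sup Finset.univ
    (Finset.univ_nonempty_iff.2 ⟨⟨0, hn⟩⟩) (deg G)
  refine ⟨x, (SimpleGraph.deg_eq_card_sub_one_iff x).1 ?_⟩
  rw [Fintype.card_fin, ← hx, ← h]
  rfl

theorem clique_count_of_maxDeg_eq_n_sub_one {n : ℕ} (hn : 7 ≤ n)
    (G H : SimpleGraph (Fin n)) (hshare : ShareCards G H)
    (hDelta : maxDeg G = n - 1) :
    ∀ r : ℕ, 1 ≤ r → r ≤ n - 1 → kappa G r = kappa H r := by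
  obtain ⟨σ, u, h⟩ := hshare.exists_shareCardsAlong
  obtain ⟨x, hx⟩ := exists_isUniversal_of_maxDeg_eq (by omega) hDelta
  intro r _ _
  exact h.kappa_eq_s8 (by rwa [Fintype.card_fin]) hx r
end

section
/- Let n ≥ 7 and let G and H be simple graphs on n vertices that share n−1 cards. Then the degree sequences of G and H coincide, i.e., the multiset { deg(v,G) : v ∈ V(G) } equals the multiset { deg(v,H) : v ∈ V(H) }. -/
open SimpleGraph

/-!
Let `π` match the cards `G - v` and `H - π v` for `v ≠ u`. The card `G - v` has degree sum
`∑ deg G - 2 deg G v`, so `deg G v - deg H (π v)` is a constant `c`, and summing over `v ≠ u`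
gives `deg H w - deg G u = (n - 3) c`; since `n ≥ 7` this forces `c ∈ {-1, 0, 1}`, and `c = 0` is
the theorem. For `c = 1` (`c = -1` is symmetric) we get `deg G u ≤ 2` and `deg H w ≥ n - 3`.
Counting, over all the shared cards, the degree entries that are at least `T`, once in `G` and
once in `H`, gives for every `1 ≤ T ≤ n - 2` a linear relation between the numbers of vertices of
each degree. For each value of `deg G u` a few of these relations are inconsistent, except for
`deg G u = 1` and two degree sequences on `7` vertices, which are excluded by comparing the
degrees in one explicit pair of matched cards.
-/

open Finset

attribute [local instance 10] Classical.propDecidable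

namespace DegreeSequence

section Cards

variable {V : Type*}

theorem deg_gcard (G : SimpleGraph V) (v : V) (x : {y // y ≠ v}) :
    deg (gcard G v) x = deg G x - if G.Adj v x then 1 else 0 := by
  have himage : Subtype.val '' (gcard G v).neighborSet x = G.neighborSet x \ {v} := by
    ext y
    constructor
    · rintro ⟨y, hxy, rfl⟩
      exact ⟨hxy, y.2⟩
    · rintro ⟨hxy, hy⟩
      exact ⟨⟨y, hy⟩, hxy, rfl⟩
  rw [deg, ← Set.ncard_image_of_injective _ Subtype.val_injective, himage, deg]
  split_ifs with hvx
  · exact Set.ncard_sdiff_singleton_of_mem hvx.symm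
  · rw [Set.sdiff_singleton_eq_self (show v ∉ G.neighborSet x from fun h => hvx h.symm),
      Nat.sub_zero]

theorem card_filter_le_deg_sub_ite (G : SimpleGraph V) {T : ℕ} (hT : 1 ≤ T) (s : Finset V)
    (x : V) :
    #{v ∈ s | T ≤ deg G x - if G.Adj v x then 1 else 0} =
      if T < deg G x then #s else if deg G x = T then #{v ∈ s | ¬G.Adj v x} else 0 := by
  split_ifs with hlt heq
  · exact congrArg card (filter_true_of_mem fun v _ => by split_ifs <;> omega)
  · exact congrArg card (filter_congr fun v _ => by split_ifs with h <;> simp [h] <;> omega)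
  · exact card_eq_zero.2 (filter_false_of_mem fun v _ => by split_ifs <;> omega)

variable [Fintype V]

noncomputable def degreeMultiset (G : SimpleGraph V) : Multiset ℕ :=
  univ.val.map (deg G)

theorem degreeMultiset_congr {W : Type*} [Fintype W] {G : SimpleGraph V} {H : SimpleGraph W}
    (e : G ≃g H) : degreeMultiset G = degreeMultiset H := by
  rw [degreeMultiset, degreeMultiset, ← map_univ_equiv e.toEquiv, map_val, Multiset.map_map]
  refine Multiset.map_congr rfl fun x _ => ?_
  rw [Function.comp_apply, deg, deg, ← Nat.card_coe_set_eq, ← Nat.card_coe_set_eq]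
  exact Nat.card_congr (e.mapNeighborSet x)

theorem deg_eq_card_filter (G : SimpleGraph V) (x : V) : deg G x = #{y | G.Adj x y} := by
  rw [deg, ← Set.ncard_coe_finset]
  congr 1
  ext y
  simp

theorem deg_pos_of_adj {G : SimpleGraph V} {x y : V} (h : G.Adj x y) : 0 < deg G x := by
  rw [deg_eq_card_filter]
  exact card_pos.2 ⟨y, by simpa using h⟩

variable [DecidableEq V]

theorem deg_eq_card_filter_erase (G : SimpleGraph V) (x : V) :
    deg G x = #{y ∈ univ.erase x | G.Adj x y} := by
  rw [deg_eq_card_filter, filter_erase, erase_eq_of_notMem (by simp)]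

theorem card_filter_not_adj_add_deg (G : SimpleGraph V) (x : V) :
    #{y ∈ univ.erase x | ¬G.Adj x y} + deg G x = Fintype.card V - 1 := by
  rw [deg_eq_card_filter_erase, add_comm, card_filter_add_card_filter_not,
    card_erase_of_mem (mem_univ x), card_univ]

theorem card_filter_not_adj_erase_add (G : SimpleGraph V) {u x : V} (hxu : x ≠ u) :
    #{v ∈ (univ.erase u).erase x | ¬G.Adj v x} + deg G x + (if G.Adj u x then 0 else 1) =
      Fintype.card V - 1 := by
  have h := card_filter_not_adj_add_deg G x
  rw [erase_right_comm, filter_erase]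
  simp only [G.adj_comm _ x] at h ⊢
  split_ifs with hux
  · rw [erase_eq_of_notMem (by simp [hux])]
    omega
  · rw [card_erase_of_mem (by simp [hux, hxu.symm])]
    have : 0 < #{v ∈ univ.erase x | ¬G.Adj x v} := card_pos.2 ⟨u, by simp [hux, hxu.symm]⟩
    omega

theorem deg_lt_card (G : SimpleGraph V) (x : V) : deg G x < Fintype.card V := by
  have := card_filter_not_adj_add_deg G x
  have : 0 < Fintype.card V := Fintype.card_pos_iff.2 ⟨x⟩
  omega

theorem adj_of_deg_eq_card_sub_one (G : SimpleGraph V) {x : V}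
    (hx : deg G x = Fintype.card V - 1) {y : V} (hxy : x ≠ y) : G.Adj x y := by
  have h := card_filter_not_adj_add_deg G x
  by_contra hadj
  have : 0 < #{y ∈ univ.erase x | ¬G.Adj x y} := card_pos.2 ⟨y, by simp [hadj, hxy.symm]⟩
  omega

theorem degreeMultiset_gcard (G : SimpleGraph V) (v : V) :
    degreeMultiset (gcard G v) =
      (univ.erase v).val.map fun x => deg G x - if G.Adj v x then 1 else 0 := by
  have hsub : (univ : Finset {y // y ≠ v}).map (Function.Embedding.subtype _) = univ.erase v := by
    ext y
    simp
  rw [← hsub, map_val, Multiset.map_map, degreeMultiset]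
  exact Multiset.map_congr rfl fun x _ => deg_gcard G v x

theorem sum_degreeMultiset_gcard_add (G : SimpleGraph V) (v : V) :
    (degreeMultiset (gcard G v)).sum + 2 * deg G v = ∑ x, deg G x := by
  have hadj : ∑ x ∈ univ.erase v, (if G.Adj v x then 1 else 0) = deg G v := by
    rw [sum_boole, deg_eq_card_filter_erase, Nat.cast_id]
  rw [degreeMultiset_gcard, sum_map_val, two_mul, ← add_assoc, ← hadj, ← sum_add_distrib,
    ← sum_erase_add _ _ (mem_univ v)]
  congr 1
  refine sum_congr rfl fun x _ => ?_
  split_ifs with hvx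
  · have := deg_pos_of_adj hvx.symm
    omega
  · rfl

theorem countP_le_degreeMultiset_gcard (G : SimpleGraph V) (v : V) (T : ℕ) :
    (degreeMultiset (gcard G v)).countP (T ≤ ·) =
      #{x ∈ univ.erase v | T ≤ deg G x - if G.Adj v x then 1 else 0} := by
  rw [degreeMultiset_gcard, Multiset.countP_map]
  rfl

end Cards

section DegreeCounts

variable {V : Type*} [Fintype V] [DecidableEq V]

noncomputable def numDegEq (G : SimpleGraph V) (r : V) (T : ℕ) : ℕ :=
  #{x ∈ univ.erase r | deg G x = T}

noncomputable def numDegGt (G : SimpleGraph V) (r : V) (T : ℕ) : ℕ :=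
  #{x ∈ univ.erase r | T < deg G x}

noncomputable def numNbrDegEq (G : SimpleGraph V) (r : V) (T : ℕ) : ℕ :=
  #{x ∈ univ.erase r | G.Adj r x ∧ deg G x = T}

noncomputable def numNonNbrDegEq (G : SimpleGraph V) (r : V) (T : ℕ) : ℕ :=
  #{x ∈ univ.erase r | ¬G.Adj r x ∧ deg G x = T}

variable (G : SimpleGraph V) (r : V)

theorem count_degreeMultiset_gcard (t : ℕ) :
    (degreeMultiset (gcard G r)).count t = numNonNbrDegEq G r t + numNbrDegEq G r (t + 1) := by
  have hsplit : ∀ x, (t = deg G x - if G.Adj r x then 1 else 0) ↔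
      (¬G.Adj r x ∧ deg G x = t) ∨ (G.Adj r x ∧ deg G x = t + 1) := by
    intro x
    by_cases hrx : G.Adj r x
    · have := deg_pos_of_adj hrx.symm
      simp only [hrx, if_true, not_true, false_and, true_and, false_or]
      omega
    · simp only [hrx, if_false, not_false_eq_true, true_and, false_and, or_false]
      omega
  rw [Multiset.count, degreeMultiset_gcard, Multiset.countP_map]
  change #{x ∈ univ.erase r | t = _} = _
  rw [filter_congr fun x _ => hsplit x, filter_or,
    card_union_of_disjoint (disjoint_filter.2 fun x _ h₁ h₂ => h₁.1 h₂.1)]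
  rfl

theorem numNbrDegEq_add_numNonNbrDegEq (T : ℕ) :
    numNbrDegEq G r T + numNonNbrDegEq G r T = numDegEq G r T := by
  rw [numNbrDegEq, numNonNbrDegEq, numDegEq, card_filter, card_filter, card_filter,
    ← sum_add_distrib]
  exact sum_congr rfl fun x _ => by split_ifs <;> tauto

theorem numDegGt_eq_add (T : ℕ) :
    numDegGt G r T = numDegGt G r (T + 1) + numDegEq G r (T + 1) := by
  rw [numDegGt, numDegGt, numDegEq, card_filter, card_filter, card_filter, ← sum_add_distrib]
  exact sum_congr rfl fun x _ => by split_ifs <;> omega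

theorem numDegEq_add_ite (T : ℕ) :
    numDegEq G r T + (if deg G r = T then 1 else 0) = #{x | deg G x = T} := by
  rw [numDegEq, filter_erase]
  split_ifs with h
  · exact card_erase_add_one (by simpa using h)
  · rw [erase_eq_of_notMem (by simpa using h), add_zero]

theorem numDegEq_pos {x : V} (hx : x ≠ r) {T : ℕ} (hdeg : deg G x = T) :
    0 < numDegEq G r T :=
  card_pos.2 ⟨x, by simp [hx, hdeg]⟩

theorem numNbrDegEq_pos {x : V} (hx : G.Adj r x) {T : ℕ} (hdeg : deg G x = T) :
    0 < numNbrDegEq G r T :=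
  card_pos.2 ⟨x, by simp [hx, hx.ne.symm, hdeg]⟩

theorem eq_of_numDegEq_le_one {T : ℕ} (h : numDegEq G r T ≤ 1) {x y : V} (hx : x ≠ r)
    (hy : y ≠ r) (hdx : deg G x = T) (hdy : deg G y = T) : x = y :=
  card_le_one.1 h x (by simp [hx, hdx]) y (by simp [hy, hdy])

theorem numNbrDegEq_add_le_deg {T T' : ℕ} (h : T ≠ T') :
    numNbrDegEq G r T + numNbrDegEq G r T' ≤ deg G r := by
  rw [numNbrDegEq, numNbrDegEq, deg_eq_card_filter_erase, card_filter, card_filter, card_filter,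
    ← sum_add_distrib]
  exact sum_le_sum fun x _ => by simp only [ite_and]; split_ifs <;> omega

theorem numNonNbrDegEq_add_le_deg {T₁ T₂ T₃ : ℕ} (h₁₂ : T₁ ≠ T₂) (h₁₃ : T₁ ≠ T₃)
    (h₂₃ : T₂ ≠ T₃) :
    numNonNbrDegEq G r T₁ + numNonNbrDegEq G r T₂ + numNonNbrDegEq G r T₃ + deg G r ≤
      Fintype.card V - 1 := by
  rw [← card_univ, ← card_erase_of_mem (mem_univ r), card_eq_sum_ones, numNonNbrDegEq,
    numNonNbrDegEq, numNonNbrDegEq, deg_eq_card_filter_erase, card_filter, card_filter,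
    card_filter, card_filter, ← sum_add_distrib, ← sum_add_distrib, ← sum_add_distrib]
  exact sum_le_sum fun x _ => by simp only [ite_and]; split_ifs <;> omega

theorem numNonNbrDegEq_zero : numNonNbrDegEq G r 0 = numDegEq G r 0 := by
  refine congrArg card (filter_congr fun x _ => ⟨And.right, fun h => ⟨fun hrx => ?_, h⟩⟩)
  exact (deg_pos_of_adj hrx.symm).ne' h

theorem numNonNbrDegEq_card_sub_one : numNonNbrDegEq G r (Fintype.card V - 1) = 0 :=
  card_eq_zero.2 <| filter_false_of_mem fun _ hx ⟨hrx, hdeg⟩ =>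
    hrx (adj_of_deg_eq_card_sub_one G hdeg (ne_of_mem_erase hx)).symm

theorem numNbrDegEq_of_deg_eq_one (h : deg G r = 1) {y : V} (hy : G.Adj r y) (T : ℕ) :
    numNbrDegEq G r T = if deg G y = T then 1 else 0 := by
  have hnbrs : {x ∈ univ.erase r | G.Adj r x} = {y} := by
    refine eq_singleton_iff_unique_mem.2 ⟨by simp [hy, hy.ne.symm], fun x hx => ?_⟩
    rw [deg_eq_card_filter_erase] at h
    exact card_le_one.1 h.le x hx y (by simp [hy, hy.ne.symm])
  rw [numNbrDegEq, ← filter_filter, hnbrs, filter_singleton]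
  split_ifs <;> simp

end DegreeCounts

section MatchedCards

variable {V : Type*} [Fintype V] [DecidableEq V] {G H : SimpleGraph V} {u w : V}

def CardDegreesMatch (G H : SimpleGraph V) (π : {x // x ≠ u} ≃ {y // y ≠ w}) : Prop :=
  ∀ x, degreeMultiset (gcard G x.1) = degreeMultiset (gcard H (π x).1)

def DegreesShifted (G H : SimpleGraph V) (π : {x // x ≠ u} ≃ {y // y ≠ w}) : Prop :=
  ∀ x : {x // x ≠ u}, deg G x = deg H (π x) + 1

theorem CardDegreesMatch.symm {π : {x // x ≠ u} ≃ {y // y ≠ w}}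
    (h : CardDegreesMatch G H π) : CardDegreesMatch H G π.symm := by
  intro y
  have hy := h (π.symm y)
  rw [Equiv.apply_symm_apply] at hy
  exact hy.symm

theorem sum_erase_eq_of_equiv {M : Type*} [AddCommMonoid M] (π : {x // x ≠ u} ≃ {y // y ≠ w})
    {f g : V → M} (h : ∀ x : {x // x ≠ u}, f x = g (π x)) :
    ∑ x ∈ univ.erase u, f x = ∑ y ∈ univ.erase w, g y := by
  rw [sum_subtype (univ.erase u) (p := (· ≠ u)) (by simp),
    sum_subtype (univ.erase w) (p := (· ≠ w)) (by simp), ← Equiv.sum_comp π]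
  exact sum_congr rfl fun x _ => h x

theorem card_filter_erase_eq_of_equiv (π : {x // x ≠ u} ≃ {y // y ≠ w}) {p q : V → Prop}
    [DecidablePred p] [DecidablePred q] (h : ∀ x : {x // x ≠ u}, p x ↔ q (π x)) :
    #{x ∈ univ.erase u | p x} = #{y ∈ univ.erase w | q y} := by
  rw [card_filter, card_filter]
  exact sum_erase_eq_of_equiv π fun x => by simp only [h x]

theorem degreeMultiset_eq_of_deg_eq (π : {x // x ≠ u} ≃ {y // y ≠ w})
    (hdeg : ∀ x : {x // x ≠ u}, deg G x = deg H (π x)) (hu : deg G u = deg H w) :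
    degreeMultiset G = degreeMultiset H := by
  let e : V ≃ V :=
    (Equiv.optionSubtypeNe u).symm.trans (π.optionCongr.trans (Equiv.optionSubtypeNe w))
  rw [degreeMultiset, degreeMultiset]
  conv_rhs => rw [← map_univ_equiv e, map_val, Multiset.map_map]
  refine Multiset.map_congr rfl fun x _ => ?_
  by_cases hx : x = u
  · subst hx
    simp [e, hu]
  · simp [e, hx, hdeg ⟨x, hx⟩]

theorem CardDegreesMatch.sum_deg_sub_sum_deg {π : {x // x ≠ u} ≃ {y // y ≠ w}}
    (h : CardDegreesMatch G H π) (x : {x // x ≠ u}) :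
    ((∑ v, deg G v : ℕ) : ℤ) - ((∑ v, deg H v : ℕ) : ℤ) =
      2 * ((deg G x : ℤ) - deg H (π x)) := by
  have hG := sum_degreeMultiset_gcard_add G x
  have hH := sum_degreeMultiset_gcard_add H (π x)
  rw [h x] at hG
  rw [← hG, ← hH]
  push_cast
  ring

theorem sum_deg_sub_sum_deg_of_deg_eq_add (π : {x // x ≠ u} ≃ {y // y ≠ w}) {c : ℤ}
    (hc : ∀ x : {x // x ≠ u}, (deg G x : ℤ) = deg H (π x) + c) :
    ((∑ v, deg G v : ℕ) : ℤ) - ((∑ v, deg H v : ℕ) : ℤ) =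
      (Fintype.card V - 1 : ℕ) * c + deg G u - deg H w := by
  have hcard : Fintype.card {x // x ≠ u} = Fintype.card V - 1 := by
    rw [Fintype.card_subtype_compl, Fintype.card_subtype_eq]
  rw [Fintype.sum_eq_add_sum_subtype_ne _ u, Fintype.sum_eq_add_sum_subtype_ne _ w,
    ← Equiv.sum_comp π]
  push_cast
  simp only [hc, sum_add_distrib, sum_const, card_univ, hcard, nsmul_eq_mul]
  ring

theorem CardDegreesMatch.deg_trichotomy {π : {x // x ≠ u} ≃ {y // y ≠ w}}
    (h : CardDegreesMatch G H π) (hV : 7 ≤ Fintype.card V) :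
    (DegreesShifted H G π.symm ∧ deg G u = deg H w + (Fintype.card V - 3)) ∨
      ((∀ x : {x // x ≠ u}, deg G x = deg H (π x)) ∧ deg G u = deg H w) ∨
      (DegreesShifted G H π ∧ deg H w = deg G u + (Fintype.card V - 3)) := by
  obtain ⟨x₀⟩ : Nonempty {x // x ≠ u} := by
    rw [← Fintype.card_pos_iff, Fintype.card_subtype_compl, Fintype.card_subtype_eq]
    omega
  set c : ℤ := deg G x₀ - deg H (π x₀)
  have hc : ∀ x : {x // x ≠ u}, (deg G x : ℤ) = deg H (π x) + c := by
    intro x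
    have := h.sum_deg_sub_sum_deg x
    have := h.sum_deg_sub_sum_deg x₀
    omega
  have hsum := sum_deg_sub_sum_deg_of_deg_eq_add π hc
  rw [h.sum_deg_sub_sum_deg x₀] at hsum
  have hGu := deg_lt_card G u
  have hHw := deg_lt_card H w
  -- `hsum` says `(|V| - 3) * c = deg H w - deg G u`, and `|deg H w - deg G u| < 2 * (|V| - 3)`
  have hc' : c = -1 ∨ c = 0 ∨ c = 1 := by
    push_cast [Nat.cast_sub (by omega : 1 ≤ Fintype.card V)] at hsum
    have : c < 2 := by nlinarith
    have : -2 < c := by nlinarith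
    omega
  rcases hc' with hc' | hc' | hc' <;> rw [hc'] at hc hsum
  · refine Or.inl ⟨fun y => ?_, by omega⟩
    have := hc (π.symm y)
    rw [Equiv.apply_symm_apply] at this
    omega
  · exact Or.inr (Or.inl ⟨fun x => by have := hc x; omega, by omega⟩)
  · exact Or.inr (Or.inr ⟨fun x => by have := hc x; omega, by omega⟩)

variable {π : {x // x ≠ u} ≃ {y // y ≠ w}}

theorem numDegEq_eq_of_degreesShifted (hshift : DegreesShifted G H π) (T : ℕ) :
    numDegEq H w T = numDegEq G u (T + 1) :=
  (card_filter_erase_eq_of_equiv π fun x => by rw [hshift x]; omega).symm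

theorem numDegGt_eq_of_degreesShifted (hshift : DegreesShifted G H π) (T : ℕ) :
    numDegGt H w T = numDegGt G u (T + 1) :=
  (card_filter_erase_eq_of_equiv π fun x => by rw [hshift x]; omega).symm

theorem numNbrDegEq_le_of_degreesShifted (hshift : DegreesShifted G H π) (T : ℕ) :
    numNbrDegEq H w T ≤ numDegEq G u (T + 1) := by
  rw [← numDegEq_eq_of_degreesShifted hshift, ← numNbrDegEq_add_numNonNbrDegEq]
  exact Nat.le_add_right _ _

end MatchedCards

section ThresholdCounts

variable {n : ℕ} (G : SimpleGraph (Fin n))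

/-- For `1 ≤ T`: the number of cards `G - v`, `v ≠ u`, in which `u` still has degree at least `T`,
when `G` has `n` vertices and `deg G u = d`. -/
def excludedCount (n d T : ℕ) : ℕ :=
  if T < d then n - 1 else if d = T then n - 1 - T else 0

theorem excludedCount_of_lt {n d T : ℕ} (h : T < d) : excludedCount n d T = n - 1 := if_pos h

theorem excludedCount_self (n T : ℕ) : excludedCount n T T = n - 1 - T := by
  simp [excludedCount]

theorem excludedCount_of_gt {n d T : ℕ} (h : d < T) : excludedCount n d T = 0 := by
  simp [excludedCount, h.not_gt, h.ne]

theorem sum_card_filter_erase_comm {α : Type*} [Fintype α] [DecidableEq α] (s : Finset α)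
    (P : α → α → Prop) [∀ v x, Decidable (P v x)] :
    ∑ v ∈ s, #{x ∈ univ.erase v | P v x} = ∑ x, #{v ∈ s.erase x | P v x} := by
  simp only [card_filter]
  exact sum_comm' fun v x => by simp only [mem_erase, mem_univ, and_true]; tauto

-- A vertex `x ≠ u` of degree `> T` is counted in each of the `n - 2` cards `G - v`, `v ∉ {u, x}`,
-- and one of degree `T` only in those where `v` is not a neighbour of `x`.
theorem sum_countP_le_degreeMultiset_gcard (u : Fin n) {T : ℕ} (hT : 1 ≤ T)
    (hTn : T + 2 ≤ n) :
    ∑ v ∈ univ.erase u, (degreeMultiset (gcard G v)).countP (T ≤ ·) =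
      (n - 2) * numDegGt G u T + (n - 2 - T) * numDegEq G u T + numNbrDegEq G u T +
        excludedCount n (deg G u) T := by
  simp only [countP_le_degreeMultiset_gcard]
  rw [sum_card_filter_erase_comm, ← add_sum_erase _ _ (mem_univ u), erase_idem,
    card_filter_le_deg_sub_ite G hT, add_comm]
  congr 1
  · have hx : ∀ x ∈ univ.erase u,
        #{v ∈ (univ.erase u).erase x | T ≤ deg G x - if G.Adj v x then 1 else 0} =
          (if T < deg G x then n - 2 else 0) + (if deg G x = T then n - 2 - T else 0) +
            (if G.Adj u x ∧ deg G x = T then 1 else 0) := by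
      intro x hx
      have hxu := ne_of_mem_erase hx
      have hnonadj := card_filter_not_adj_erase_add G hxu
      rw [Fintype.card_fin] at hnonadj
      rw [card_filter_le_deg_sub_ite G hT, card_erase_of_mem hx,
        card_erase_of_mem (mem_univ u), card_univ, Fintype.card_fin]
      simp only [ite_and]
      split_ifs at hnonadj ⊢ <;> omega
    rw [sum_congr rfl hx, sum_add_distrib, sum_add_distrib, ← sum_filter, ← sum_filter,
      ← sum_filter, sum_const, sum_const, sum_const, smul_eq_mul, smul_eq_mul, smul_eq_mul,
      numDegGt, numDegEq, numNbrDegEq, mul_one, mul_comm, mul_comm #_]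
  · have hnonadj := card_filter_not_adj_add_deg G u
    simp only [G.adj_comm _ u, Fintype.card_fin] at hnonadj ⊢
    rw [excludedCount, card_erase_of_mem (mem_univ u), card_univ, Fintype.card_fin]
    split_ifs <;> omega

end ThresholdCounts

section Identity

variable {n : ℕ} {G H : SimpleGraph (Fin n)} {u w : Fin n}
  {π : {x // x ≠ u} ≃ {y // y ≠ w}}

theorem threshold_identity (hshift : DegreesShifted G H π)
    (hcards : CardDegreesMatch G H π) {T : ℕ} (hT : 1 ≤ T) (hTn : T + 2 ≤ n) :
    T * numDegEq G u (T + 1) + (n - 2 - T) * numDegEq G u T + numNbrDegEq G u T +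
        excludedCount n (deg G u) T =
      numNbrDegEq H w T + excludedCount n (deg H w) T := by
  have hsum := sum_erase_eq_of_equiv π
    (f := fun v => (degreeMultiset (gcard G v)).countP (T ≤ ·))
    (g := fun v => (degreeMultiset (gcard H v)).countP (T ≤ ·)) fun x => by simp only [hcards x]
  rw [sum_countP_le_degreeMultiset_gcard G u hT hTn,
    sum_countP_le_degreeMultiset_gcard H w hT hTn, numDegGt_eq_of_degreesShifted hshift,
    numDegEq_eq_of_degreesShifted hshift, numDegGt_eq_add G u T] at hsum
  generalize hk : n - 2 - T = k at hsum ⊢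
  rw [show n - 2 = T + k by omega] at hsum
  linarith

theorem nonneighbor_bound (hshift : DegreesShifted G H π) {T₁ T₂ : ℕ}
    (h₁ : T₁ ≠ 0) (h₂ : T₂ ≠ 0) (h₁₂ : T₁ ≠ T₂) :
    numDegEq G u (T₁ + 1) + numDegEq G u (T₂ + 1) + numDegEq G u 1 + deg H w ≤
      numNbrDegEq H w T₁ + numNbrDegEq H w T₂ + (n - 1) := by
  have h := numNonNbrDegEq_add_le_deg H w h₁₂ h₁ h₂
  have h₀ := numNonNbrDegEq_zero H w
  rw [Fintype.card_fin] at h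
  rw [numDegEq_eq_of_degreesShifted hshift 0] at h₀
  rw [← numDegEq_eq_of_degreesShifted hshift, ← numDegEq_eq_of_degreesShifted hshift,
    ← numNbrDegEq_add_numNonNbrDegEq, ← numNbrDegEq_add_numNonNbrDegEq, ← h₀]
  omega

end Identity

section Pendant

variable {V : Type*} [Fintype V] [DecidableEq V] {G H : SimpleGraph V} {u w : V}
  {π : {x // x ≠ u} ≃ {y // y ≠ w}}

theorem false_of_pendant_neighbor (hshift : DegreesShifted G H π)
    (hcards : CardDegreesMatch G H π) (hGu : deg G u ≠ 3) (hHw : deg H w ≠ 3)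
    (hB₃ : numDegEq G u 3 = 0) (hB₄ : 3 ≤ numDegEq G u 4) (hmH₁ : numNbrDegEq H w 1 ≠ 0) :
    False := by
  obtain ⟨p, hp⟩ := card_pos.1 (Nat.pos_of_ne_zero hmH₁)
  simp only [mem_filter, mem_erase, mem_univ, and_true] at hp
  obtain ⟨hpw, hwp, hdp⟩ := hp
  set c := π.symm ⟨p, hpw⟩
  have hπc : π c = ⟨p, hpw⟩ := π.apply_symm_apply _
  have hdc : deg G c = 2 := by rw [hshift c, hπc, hdp]
  have hcount := congrArg (Multiset.count 3) (hcards c)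
  rw [hπc, count_degreeMultiset_gcard, count_degreeMultiset_gcard] at hcount
  simp only [Nat.reduceAdd] at hcount
  -- in `G - c` only the two neighbours of `c` can have degree `3`
  have hGc := numNbrDegEq_add_le_deg G c (T := 4) (T' := 5) (by omega)
  have hGc₃ := numNbrDegEq_add_numNonNbrDegEq G c 3
  have hG₃ := numDegEq_add_ite G c 3
  have hG₃' := numDegEq_add_ite G u 3
  -- in `H - p` all the vertices of degree `3` keep it, since `w` is the only neighbour of `p`
  have hHp₃ := numNbrDegEq_add_numNonNbrDegEq H p 3
  have hHp := numNbrDegEq_of_deg_eq_one H p hdp hwp.symm 3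
  have hH₃ := numDegEq_add_ite H p 3
  have hH₃' := numDegEq_add_ite H w 3
  rw [numDegEq_eq_of_degreesShifted hshift] at hH₃'
  simp only [hdc, hdp, hGu, hHw, Nat.reduceAdd, Nat.reduceEqDiff, if_false]
    at hG₃ hG₃' hH₃ hH₃' hHp
  omega

theorem deg_eq_two_or_four_of_adj_pendant (hV : Fintype.card V = 7)
    (hshift : DegreesShifted G H π) (hB₂ : numDegEq G u 2 = 1) (hB₄ : numDegEq G u 4 = 0)
    (hB₆ : numDegEq G u 6 = 0) {z y : V} (hzw : z ≠ w) (hdz : deg H z = 1) (hy : H.Adj z y)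
    (hyw : y ≠ w) : deg H y = 2 ∨ deg H y = 4 := by
  have hpos := numDegEq_pos H w hyw rfl
  have h₁ : deg H y ≠ 1 := fun h =>
    hy.ne (eq_of_numDegEq_le_one H w (by rw [numDegEq_eq_of_degreesShifted hshift, hB₂]) hzw
      hyw hdz h)
  have hlt : deg H y + 1 < 7 := by
    have : deg G (π.symm ⟨y, hyw⟩) = deg H y + 1 := by simpa using hshift (π.symm ⟨y, hyw⟩)
    have := deg_lt_card G (π.symm ⟨y, hyw⟩)
    omega
  have h₀ := deg_pos_of_adj hy.symm
  rw [numDegEq_eq_of_degreesShifted hshift] at hpos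
  obtain h | h | h | h | h :
      deg H y = 2 ∨ deg H y = 4 ∨ deg H y = 3 ∨ deg H y = 5 ∨ deg H y = 1 := by omega
  all_goals first | omega | simp only [h, Nat.reduceAdd] at hpos; omega

theorem false_of_pendant_nonneighbor (hV : Fintype.card V = 7)
    (hshift : DegreesShifted G H π) (hcards : CardDegreesMatch G H π)
    (hdu : deg G u = 1) (hdw : deg H w = 5) (hB₂ : numDegEq G u 2 = 1) (hB₃ : numDegEq G u 3 = 3)
    (hB₄ : numDegEq G u 4 = 0) (hB₆ : numDegEq G u 6 = 0) (hmH₁ : numNbrDegEq H w 1 = 0) :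
    False := by
  obtain ⟨c, hc⟩ := card_pos.1 (hB₂ ▸ Nat.one_pos : 0 < numDegEq G u 2)
  simp only [mem_filter, mem_erase, mem_univ, and_true] at hc
  obtain ⟨hcu, hdc⟩ := hc
  have hcount := congrArg (fun s => s.count 2 + s.count 3) (hcards ⟨c, hcu⟩)
  simp only [count_degreeMultiset_gcard, Nat.reduceAdd] at hcount
  set z := π ⟨c, hcu⟩
  have hdz : deg H z = 1 := by have : deg G c = deg H z + 1 := hshift ⟨c, hcu⟩; omega
  obtain ⟨y, hy⟩ := card_pos.1 (by rw [← deg_eq_card_filter]; omega : 0 < #{y | H.Adj z y})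
  simp only [mem_filter, mem_univ, true_and] at hy
  have hyw : y ≠ w := by
    rintro rfl
    exact (numNbrDegEq_pos H y hy.symm hdz).ne' hmH₁
  have hdy := deg_eq_two_or_four_of_adj_pendant hV hshift hB₂ hB₄ hB₆ z.2 hdz hy hyw
  -- in `G - c` exactly the three vertices of degree `3` have degree `2` or `3`
  have hGc₂ := numNbrDegEq_add_numNonNbrDegEq G c 2
  have hGc₃ := numNbrDegEq_add_numNonNbrDegEq G c 3
  have hGc₄ := numNbrDegEq_add_numNonNbrDegEq G c 4
  have hG₂ := numDegEq_add_ite G c 2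
  have hG₂' := numDegEq_add_ite G u 2
  have hG₃ := numDegEq_add_ite G c 3
  have hG₃' := numDegEq_add_ite G u 3
  have hG₄ := numDegEq_add_ite G c 4
  have hG₄' := numDegEq_add_ite G u 4
  -- in `H - z` the count is `3 ± 1`, according to the degree of the only neighbour `y` of `z`
  have hHz₂ := numNbrDegEq_add_numNonNbrDegEq H z 2
  have hHz₃ := numNbrDegEq_add_numNonNbrDegEq H z 3
  have hH₂ := numDegEq_add_ite H z 2
  have hH₂' := numDegEq_add_ite H w 2
  have hH₃ := numDegEq_add_ite H z 3
  have hH₃' := numDegEq_add_ite H w 3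
  have hy₂ := numNbrDegEq_of_deg_eq_one H z hdz hy 2
  have hy₄ := numNbrDegEq_of_deg_eq_one H z hdz hy 4
  rw [numDegEq_eq_of_degreesShifted hshift] at hH₂' hH₃'
  simp only [hdc, hdu, hdz, hdw, Nat.reduceAdd, Nat.reduceEqDiff, if_true, if_false]
    at hG₂ hG₂' hG₃ hG₃' hG₄ hG₄' hH₂ hH₂' hH₃ hH₃'
  rcases hdy with h | h <;> simp only [h, Nat.reduceEqDiff, if_true, if_false] at hy₂ hy₄ <;> omega

end Pendant

section SevenVertices

variable {G H : SimpleGraph (Fin 7)} {u w : Fin 7} {π : {x // x ≠ u} ≃ {y // y ≠ w}}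

theorem false_of_deg_eq_one_of_seven (hshift : DegreesShifted G H π)
    (hcards : CardDegreesMatch G H π) (hd : deg G u = 1) (hD : deg H w = 5)
    (hB₂ : numDegEq G u 2 = numNbrDegEq H w 1 + 1) (hB₄ : numDegEq G u 4 = 3 ∨ numDegEq G u 4 = 0)
    (hB₆ : numDegEq G u 6 = 0) (hmG : numNbrDegEq G u 2 = 0 ∧ numNbrDegEq G u 3 = 0) :
    False := by
  have E₂ := threshold_identity hshift hcards (T := 2) (by omega) (by omega)
  have E₃ := threshold_identity hshift hcards (T := 3) (by omega) (by omega)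
  rw [hd, hD, excludedCount_of_gt (by omega), excludedCount_of_lt (by omega)] at E₂ E₃
  have hmH₂ := numNbrDegEq_le_of_degreesShifted hshift 2
  have hmH₃ := numNbrDegEq_le_of_degreesShifted hshift 3
  simp only [Nat.reduceAdd, Nat.reduceSub] at E₂ E₃ hmH₂ hmH₃
  rcases hB₄ with hB₄ | hB₄
  · exact false_of_pendant_neighbor hshift hcards (by omega) (by omega) (by omega) (by omega)
      (by omega)
  · exact false_of_pendant_nonneighbor (Fintype.card_fin 7) hshift hcards hd hD (by omega)
      (by omega) hB₄ hB₆ (by omega)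

end SevenVertices

section NoShift

variable {n : ℕ} {G H : SimpleGraph (Fin n)} {u w : Fin n}
  {π : {x // x ≠ u} ≃ {y // y ≠ w}}

theorem false_of_deg_eq_zero (hn : 7 ≤ n) (hshift : DegreesShifted G H π)
    (hcards : CardDegreesMatch G H π) (hD : deg H w = deg G u + (n - 3)) (hd : deg G u = 0) :
    False := by
  have E := threshold_identity hshift hcards (T := 1) le_rfl (by omega)
  rw [excludedCount_of_gt (by omega), excludedCount_of_lt (by omega), one_mul] at E
  have hmG := numNbrDegEq_add_le_deg G u (T := 1) (T' := 2) (by omega)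
  have hmH₁ := numNbrDegEq_le_of_degreesShifted hshift 1
  have hmH₂ := numNbrDegEq_le_of_degreesShifted hshift 2
  have hbound := nonneighbor_bound hshift (T₁ := 1) (T₂ := 2) (by omega) (by omega) (by omega)
  have hB₁ : numDegEq G u 1 < 2 := Nat.lt_of_mul_lt_mul_left (a := n - 2 - 1) (by omega)
  obtain hB₁ | hB₁ : numDegEq G u 1 = 0 ∨ numDegEq G u 1 = 1 := by omega
  all_goals rw [hB₁] at E hbound; omega

theorem false_of_deg_eq_two (hn : 7 ≤ n) (hshift : DegreesShifted G H π)
    (hcards : CardDegreesMatch G H π) (hD : deg H w = deg G u + (n - 3)) (hd : deg G u = 2) :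
    False := by
  have E := threshold_identity hshift hcards (T := n - 2) (by omega) (by omega)
  rw [excludedCount_of_gt (by omega), excludedCount_of_lt (by omega), Nat.sub_self, zero_mul,
    show n - 2 + 1 = n - 1 by omega] at E
  have hmH := numNbrDegEq_le_of_degreesShifted hshift (n - 2)
  have hmH₁ := numNbrDegEq_le_of_degreesShifted hshift 1
  have hmG := numNbrDegEq_add_le_deg G u (T := n - 2) (T' := n - 1) (by omega)
  have htop := numNbrDegEq_add_numNonNbrDegEq G u (n - 1)
  have htop' := numNonNbrDegEq_card_sub_one G u
  have hbound := nonneighbor_bound hshift (T₁ := n - 2) (T₂ := 1) (by omega) (by omega) (by omega)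
  rw [Fintype.card_fin] at htop'
  rw [show n - 2 + 1 = n - 1 by omega] at hmH hbound
  obtain hB | hB | hB : numDegEq G u (n - 1) = 0 ∨ numDegEq G u (n - 1) = 1 ∨
      numDegEq G u (n - 1) = 2 := by omega
  all_goals rw [hB] at E; omega

theorem top_degrees_of_deg_eq_one (hn : 7 ≤ n) (hshift : DegreesShifted G H π)
    (hcards : CardDegreesMatch G H π) (hD : deg H w = n - 2) (hd : deg G u = 1) :
    numDegEq G u (n - 1) = 0 ∧ numNbrDegEq G u (n - 2) = 1 := by
  have E := threshold_identity hshift hcards (T := n - 2) (by omega) (by omega)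
  rw [hd, hD, excludedCount_of_gt (by omega), excludedCount_self, Nat.sub_self, zero_mul,
    show n - 2 + 1 = n - 1 by omega] at E
  have hmH := numNbrDegEq_le_of_degreesShifted hshift (n - 2)
  have hmG := numNbrDegEq_add_le_deg G u (T := n - 2) (T' := n - 1) (by omega)
  have htop := numNbrDegEq_add_numNonNbrDegEq G u (n - 1)
  have htop' := numNonNbrDegEq_card_sub_one G u
  rw [Fintype.card_fin] at htop'
  rw [show n - 2 + 1 = n - 1 by omega] at hmH
  obtain h | h : numDegEq G u (n - 1) = 0 ∨ numDegEq G u (n - 1) = 1 := by omega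
  · rw [h, mul_zero] at E
    omega
  · rw [h] at E
    omega

theorem false_of_deg_eq_one (hn : 7 ≤ n) (hshift : DegreesShifted G H π)
    (hcards : CardDegreesMatch G H π) (hD : deg H w = deg G u + (n - 3)) (hd : deg G u = 1) :
    False := by
  rw [hd, show 1 + (n - 3) = n - 2 by omega] at hD
  obtain ⟨hB_top, hmG_top⟩ := top_degrees_of_deg_eq_one hn hshift hcards hD hd
  have hmG : ∀ T, T ≠ n - 2 → numNbrDegEq G u T = 0 := fun T hT => by
    have := numNbrDegEq_add_le_deg G u hT
    omega
  have E₁ := threshold_identity hshift hcards (T := 1) le_rfl (by omega)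
  have E₂ := threshold_identity hshift hcards (T := n - 3) (by omega) (by omega)
  have E₃ := threshold_identity hshift hcards (T := n - 4) (by omega) (by omega)
  rw [hd, hD, excludedCount_self, excludedCount_of_lt (by omega), hmG 1 (by omega)] at E₁
  rw [hd, hD, excludedCount_of_gt (by omega), excludedCount_of_lt (by omega)] at E₂ E₃
  rw [hmG (n - 3) (by omega)] at E₂
  rw [hmG (n - 4) (by omega)] at E₃
  have hmH₁ := numNbrDegEq_le_of_degreesShifted hshift 1
  have hmH₂ := numNbrDegEq_le_of_degreesShifted hshift (n - 3)
  have hmH₃ := numNbrDegEq_le_of_degreesShifted hshift (n - 4)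
  have hbound := nonneighbor_bound hshift (T₁ := 1) (T₂ := n - 3) (by omega) (by omega) (by omega)
  have hsplit := numNbrDegEq_add_numNonNbrDegEq G u (n - 2)
  simp only [show n - 3 + 1 = n - 2 by omega, show n - 4 + 1 = n - 3 by omega,
    show n - 2 - (n - 3) = 1 by omega, show n - 2 - (n - 4) = 2 by omega, Nat.reduceAdd,
    one_mul] at E₁ E₂ E₃ hmH₁ hmH₂ hmH₃ hbound
  -- `E₁`: no vertex other than `u` has degree `1`
  have hB₁ : numDegEq G u 1 = 0 :=
    Nat.lt_one_iff.1 (Nat.lt_of_mul_lt_mul_left (a := n - 2 - 1) (by omega))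
  rw [hB₁, mul_zero] at E₁
  rw [hB₁] at hbound
  -- `E₂`: one or two vertices have degree `n - 2`, and either way `E₂`, `E₃` force `n = 7`
  have hB_lt : numDegEq G u (n - 2) < 3 := by
    have := Nat.sub_one_mul (n - 3) (numDegEq G u (n - 2))
    exact Nat.lt_of_mul_lt_mul_left (a := n - 3 - 1) (by omega)
  have hn₇ : n = 7 ∧ (numDegEq G u (n - 3) = 3 ∨ numDegEq G u (n - 3) = 0) := by
    obtain h | h : numDegEq G u (n - 2) = 1 ∨ numDegEq G u (n - 2) = 2 := by omega
    · rw [h, mul_one] at E₂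
      have hB₄ : numDegEq G u (n - 3) = 3 := by omega
      rw [hB₄] at E₃ hmH₃
      omega
    · rw [h] at E₂
      omega
  obtain ⟨rfl, hB₄⟩ := hn₇
  exact false_of_deg_eq_one_of_seven hshift hcards hd hD (by omega) hB₄ hB_top
    ⟨hmG 2 (by omega), hmG 3 (by omega)⟩

theorem false_of_deg_eq_succ (hn : 7 ≤ n) (hshift : DegreesShifted G H π)
    (hcards : CardDegreesMatch G H π) (hD : deg H w = deg G u + (n - 3)) : False := by
  have := deg_lt_card H w
  rw [Fintype.card_fin] at this
  obtain hd | hd | hd : deg G u = 0 ∨ deg G u = 1 ∨ deg G u = 2 := by omega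
  · exact false_of_deg_eq_zero hn hshift hcards hD hd
  · exact false_of_deg_eq_one hn hshift hcards hD hd
  · exact false_of_deg_eq_two hn hshift hcards hD hd

end NoShift

end DegreeSequence

open DegreeSequence

theorem degree_sequence_eq {n : ℕ} (hn : 7 ≤ n)
    (G H : SimpleGraph (Fin n)) (hshare : ShareCards G H) :
    Finset.univ.val.map (fun v => deg G v) =
      Finset.univ.val.map (fun v => deg H v) := by
  obtain ⟨u, w, π, hvia⟩ := hshare
  have hcards : CardDegreesMatch G H π := fun x => degreeMultiset_congr (hvia x).some
  rcases hcards.deg_trichotomy (by simpa using hn) with ⟨hshift, hD⟩ | ⟨hdeg, hu⟩ | ⟨hshift, hD⟩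
  · exact (false_of_deg_eq_succ hn hshift hcards.symm (by simpa using hD)).elim
  · exact degreeMultiset_eq_of_deg_eq π hdeg hu
  · exact (false_of_deg_eq_succ hn hshift hcards (by simpa using hD)).elim
end
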